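/- arXiv:2511.11783 — 9 statements merged into one kernel-verified Lean document; each statement's English description precedes it below -/
import Mathlib

section
/- Let k be a nonnegative integer and let N be an odd natural number with N > 64. Then the polynomial f_{k,N}(x) = (4/N^2)·x^{2(2k+1)} + (1/N^2)·x^{2k+1} + 4/N^2 ∈ ℚ[x] satisfies f_{k,N}(t) > 0 for all t ∈ ℝ, but f_{k,N} is NOT a sum of four squares in ℚ[x]. -/
open Polynomial

lemma zmod2_aux : ∀ a b : ZMod 2, (a ≠ 0 ∨ b ≠ 0) → a * a + a * b + b * b = 1 := by decide

lemma norm_coeff (s t : Polynomial (ZMod 2)) (h : ¬(s = 0 ∧ t = 0)) :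
    (s ^ 2 + s * t + t ^ 2).coeff
      (max s.natDegree t.natDegree + max s.natDegree t.natDegree) = 1 := by
  set d := max s.natDegree t.natDegree with hd
  have hs : s.natDegree ≤ d := le_max_left _ _
  have ht : t.natDegree ≤ d := le_max_right _ _
  have h1 : (s * s).coeff (d + d) = s.coeff d * s.coeff d := coeff_mul_add_eq_of_natDegree_le hs hs
  have h2 : (s * t).coeff (d + d) = s.coeff d * t.coeff d := coeff_mul_add_eq_of_natDegree_le hs ht
  have h3 : (t * t).coeff (d + d) = t.coeff d * t.coeff d := coeff_mul_add_eq_of_natDegree_le ht ht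
  rw [pow_two, pow_two, coeff_add, coeff_add, h1, h2, h3]
  apply zmod2_aux
  by_cases hs0 : s = 0
  · have ht0 : t ≠ 0 := fun h' => h ⟨hs0, h'⟩
    right
    have : d = t.natDegree := by simp [hd, hs0]
    rw [this]
    exact mt leadingCoeff_eq_zero.mp ht0
  · by_cases ht0 : t = 0
    · left
      have : d = s.natDegree := by simp [hd, ht0]
      rw [this]
      exact mt leadingCoeff_eq_zero.mp hs0
    · rcases le_total s.natDegree t.natDegree with hle | hle
      · right
        rw [hd, max_eq_right hle]
        exact mt leadingCoeff_eq_zero.mp ht0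
      · left
        rw [hd, max_eq_left hle]
        exact mt leadingCoeff_eq_zero.mp hs0

lemma norm_ne_X_pow (s t : Polynomial (ZMod 2)) {m : ℕ} (hm : Odd m)
    (h : s ^ 2 + s * t + t ^ 2 = X ^ m) : False := by
  by_cases hst : s = 0 ∧ t = 0
  · obtain ⟨rfl, rfl⟩ := hst
    simp at h
    exact (pow_ne_zero m (X_ne_zero : (X : Polynomial (ZMod 2)) ≠ 0)) h.symm
  · have hc := norm_coeff s t hst
    rw [h, coeff_X_pow] at hc
    split_ifs at hc with hmd
    · obtain ⟨j, hj⟩ := hm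
      omega
    · exact one_ne_zero hc.symm

lemma normform_eq_zero (s t : Polynomial (ZMod 2)) (h : s ^ 2 + s * t + t ^ 2 = 0) :
    s = 0 ∧ t = 0 := by
  by_contra hst
  have hc := norm_coeff s t hst
  rw [h] at hc
  simp at hc

lemma even_of_map_zero (p : Polynomial ℤ)
    (hp : p.map (Int.castRingHom (ZMod 2)) = 0) : ∃ r, p = 2 * r := by
  have hdvd : C (2 : ℤ) ∣ p := by
    rw [C_dvd_iff_dvd_coeff]
    intro i
    have := congrArg (fun q => q.coeff i) hp
    simp only [coeff_map, coeff_zero] at this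
    exact (ZMod.intCast_zmod_eq_zero_iff_dvd _ 2).mp this
  obtain ⟨r, hr⟩ := hdvd
  exact ⟨r, by rw [hr]; norm_num⟩

lemma key_lemma (m : ℕ) (hm : Odd m) (G : Polynomial ℤ)
    (hG : G.map (Int.castRingHom (ZMod 2)) = X ^ m) :
    ∀ a : ℕ, ∀ c : ℤ, Odd c → ∀ q₁ q₂ q₃ q₄ : Polynomial ℤ,
      q₁ ^ 2 + q₂ ^ 2 + q₃ ^ 2 + q₄ ^ 2 = 2 ^ a * C c * G → False := by
  intro a
  induction a using Nat.strong_induction_on with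
  | _ a IH =>
  intro c hc q₁ q₂ q₃ q₄ hq
  have h2 : (2 : Polynomial (ZMod 2)) = 0 := by
    have h22 : ((2:ZMod 2)) = 0 := by decide
    rw [← map_ofNat (C : ZMod 2 →+* Polynomial (ZMod 2)) 2, h22, map_zero]
  have hneg : ∀ x : Polynomial (ZMod 2), -x = x := fun x => by
    linear_combination (-x) * h2
  have hcbar : ((c : ZMod 2)) = 1 := by
    obtain ⟨j, rfl⟩ := hc
    push_cast
    rw [show ((2:ZMod 2)) = 0 by decide]
    ring
  set u := q₁.map (Int.castRingHom (ZMod 2)) with hu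
  set v := q₂.map (Int.castRingHom (ZMod 2)) with hv
  set w := q₃.map (Int.castRingHom (ZMod 2)) with hw
  set z := q₄.map (Int.castRingHom (ZMod 2)) with hz
  have hmap : u ^ 2 + v ^ 2 + w ^ 2 + z ^ 2 = 2 ^ a * X ^ m := by
    have := congrArg (Polynomial.map (Int.castRingHom (ZMod 2))) hq
    simp only [Polynomial.map_add, Polynomial.map_pow, Polynomial.map_mul,
      Polynomial.map_ofNat, Polynomial.map_C, Int.coe_castRingHom, hG, hcbar,
      C_1, mul_one] at this
    rw [← hu, ← hv, ← hw, ← hz] at this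
    exact this
  have hE : (u + v + w + z) ^ 2 = 2 ^ a * X ^ m := by
    rw [← hmap]
    linear_combination (u*v + u*w + u*z + v*w + v*z + w*z) * h2
  rcases Nat.eq_zero_or_pos a with rfl | hapos
  · rw [pow_zero, one_mul] at hE
    exact norm_ne_X_pow (u+v+w+z) 0 hm (by rw [← hE]; ring)
  have h2a : (2 : Polynomial (ZMod 2)) ^ a = 0 := by
    rw [h2]; exact zero_pow (by omega)
  have hEzero : u + v + w + z = 0 := by
    have : (u + v + w + z) ^ 2 = 0 := by rw [hE, h2a, zero_mul]
    exact pow_eq_zero_iff (by norm_num) |>.mp this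
  have hz4 : z = u + v + w := by
    have : z = -(u + v + w) := by linear_combination hEzero
    rw [this, hneg]
  obtain ⟨h, hh⟩ := even_of_map_zero (q₁ + q₂ + q₃ + q₄) (by
    simp only [Polynomial.map_add, ← hu, ← hv, ← hw, ← hz]; exact hEzero)
  obtain ⟨b, rfl⟩ : ∃ b, a = b + 1 := ⟨a - 1, by omega⟩
  have he2 : 2 * h ^ 2 = 2 ^ b * C c * G +
      (q₁*q₂ + q₁*q₃ + q₁*q₄ + q₂*q₃ + q₂*q₄ + q₃*q₄) := by
    have h2ne : (2 : Polynomial ℤ) ≠ 0 := by norm_num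
    apply mul_left_cancel₀ h2ne
    linear_combination hq - (q₁+q₂+q₃+q₄+2*h) * hh
  have hmape2 : u*v + u*w + u*z + v*w + v*z + w*z = 2 ^ b * X ^ m := by
    have := congrArg (Polynomial.map (Int.castRingHom (ZMod 2))) he2
    simp only [Polynomial.map_add, Polynomial.map_pow, Polynomial.map_mul,
      Polynomial.map_ofNat, Polynomial.map_C, Int.coe_castRingHom, hG, hcbar,
      C_1, mul_one] at this
    rw [← hu, ← hv, ← hw, ← hz] at this
    linear_combination (-1 : Polynomial (ZMod 2)) * this +
      ((q₄.map (Int.castRingHom (ZMod 2)))^0 * (h.map (Int.castRingHom (ZMod 2)))^2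
        - 2 ^ b * X ^ m) * h2
  rw [hz4] at hmape2
  rcases Nat.eq_zero_or_pos b with rfl | hbpos
  · rw [pow_zero, one_mul] at hmape2
    exact norm_ne_X_pow (u+w) (v+w) hm
      (by linear_combination hmape2 + (w^2 - u*v) * h2)
  have h2b : (2 : Polynomial (ZMod 2)) ^ b = 0 := by
    rw [h2]; exact zero_pow (by omega)
  have hP0 : (u+w)^2 + (u+w)*(v+w) + (v+w)^2 = 0 := by
    rw [h2b, zero_mul] at hmape2
    linear_combination hmape2 + (w^2 - u*v) * h2
  obtain ⟨huw, hvw⟩ := normform_eq_zero _ _ hP0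
  have huw' : u = w := by
    have : u = -w := by linear_combination huw
    rw [this, hneg]
  have hvw' : v = w := by
    have : v = -w := by linear_combination hvw
    rw [this, hneg]
  have hzw : z = w := by
    rw [hz4, huw', hvw']
    linear_combination w * h2
  obtain ⟨r₁, hr₁⟩ := even_of_map_zero (q₁ + q₂) (by
    simp only [Polynomial.map_add, ← hu, ← hv]
    rw [huw', hvw']
    linear_combination w * h2)
  obtain ⟨r₂, hr₂⟩ := even_of_map_zero (q₁ - q₂) (by
    simp only [Polynomial.map_sub, ← hu, ← hv]
    rw [huw', hvw']
    ring)
  obtain ⟨r₃, hr₃⟩ := even_of_map_zero (q₃ + q₄) (by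
    simp only [Polynomial.map_add, ← hw, ← hz]
    rw [hzw]
    linear_combination w * h2)
  obtain ⟨r₄, hr₄⟩ := even_of_map_zero (q₃ - q₄) (by
    simp only [Polynomial.map_sub, ← hw, ← hz]
    rw [hzw]
    ring)
  refine IH b (by omega) c hc r₁ r₂ r₃ r₄ ?_
  have h4ne : (4 : Polynomial ℤ) ≠ 0 := by norm_num
  apply mul_left_cancel₀ h4ne
  linear_combination (-(q₁+q₂+2*r₁))*hr₁ + (-(q₁-q₂+2*r₂))*hr₂ +
    (-(q₃+q₄+2*r₃))*hr₃ + (-(q₃-q₄+2*r₄))*hr₄ + 2*hq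

lemma pos_helper (R4 R1 P u : ℝ) (h4 : R4 = 4/P) (h1 : R1 = 1/P) (hP : 0 < P) :
    0 < R4 * u^2 + R1 * u + R4 := by
  subst h4
  subst h1
  have heq : 4/P*u^2 + 1/P*u + 4/P = (4*u^2+u+4)/P := by ring
  rw [heq]
  apply div_pos _ hP
  nlinarith [sq_nonneg (8*u+1)]

theorem fkN_positive_but_not_sum_of_four_squares
    (k N : ℕ) (hN : Odd N) (hN64 : 64 < N)
    (f : Polynomial ℚ)
    (hf : f = C (4 / (N : ℚ) ^ 2) * X ^ (2 * (2 * k + 1)) +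
              C (1 / (N : ℚ) ^ 2) * X ^ (2 * k + 1) +
              C (4 / (N : ℚ) ^ 2)) :
    (∀ t : ℝ, 0 < Polynomial.aeval t f) ∧
    ¬ ∃ p₁ p₂ p₃ p₄ : Polynomial ℚ, f = p₁ ^ 2 + p₂ ^ 2 + p₃ ^ 2 + p₄ ^ 2 := by
  have hNR : (0:ℝ) < (N:ℝ) := by
    have : 0 < N := by omega
    exact_mod_cast this
  have hNQ : ((N:ℚ)) ≠ 0 := by
    have : 0 < N := by omega
    positivity
  constructor
  · intro t
    rw [hf]
    simp only [map_add, map_mul, map_pow, aeval_C, aeval_X]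
    rw [show (2*(2*k+1)) = (2*k+1)*2 from by ring, pow_mul]
    exact pos_helper _ _ ((N:ℝ)^2) _ (by push_cast; norm_num) (by push_cast; norm_num)
      (pow_pos hNR 2)
  · rintro ⟨p₁, p₂, p₃, p₄, hp⟩
    have hm : Odd (2*k+1) := ⟨k, by ring⟩
    set G : Polynomial ℤ := C 4 * X ^ (2*(2*k+1)) + X ^ (2*k+1) + C 4 with hGdef
    have hG2 : G.map (Int.castRingHom (ZMod 2)) = X ^ (2*k+1) := by
      have h4 : ((4:ℤ) : ZMod 2) = 0 := by decide
      have h4' : (4 : Polynomial (ZMod 2)) = 0 := by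
        rw [← map_ofNat (C : ZMod 2 →+* Polynomial (ZMod 2)) 4,
          show ((4:ZMod 2)) = 0 by decide, map_zero]
      simp [hGdef, Polynomial.map_add, Polynomial.map_mul, Polynomial.map_pow,
        Polynomial.map_C, Polynomial.map_X, h4, h4']
    have e4 : (N:ℚ)^2 * (4/(N:ℚ)^2) = 4 := by field_simp
    have e1 : (N:ℚ)^2 * (1/(N:ℚ)^2) = 1 := by field_simp
    have hGf : G.map (Int.castRingHom ℚ) = C ((N:ℚ)^2) * f := by
      rw [hf, hGdef]
      simp only [Polynomial.map_add, Polynomial.map_mul, Polynomial.map_pow,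
        Polynomial.map_C, Polynomial.map_X]
      have c4 : C ((N:ℚ)^2) * C (4/(N:ℚ)^2) = C (4:ℚ) := by rw [← C_mul, e4]
      have c1 : C ((N:ℚ)^2) * C (1/(N:ℚ)^2) = 1 := by rw [← C_mul, e1, C_1]
      have hc4 : ((Int.castRingHom ℚ) (4:ℤ)) = (4:ℚ) := by norm_num
      rw [hc4]
      linear_combination (-(X:Polynomial ℚ)^(2*(2*k+1))) * c4 +
        (-(X:Polynomial ℚ)^(2*k+1)) * c1 + (-1 : Polynomial ℚ) * c4
    obtain ⟨b₁, hb₁⟩ := IsLocalization.integerNormalization_map_to_map (nonZeroDivisors ℤ) p₁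
    obtain ⟨b₂, hb₂⟩ := IsLocalization.integerNormalization_map_to_map (nonZeroDivisors ℤ) p₂
    obtain ⟨b₃, hb₃⟩ := IsLocalization.integerNormalization_map_to_map (nonZeroDivisors ℤ) p₃
    obtain ⟨b₄, hb₄⟩ := IsLocalization.integerNormalization_map_to_map (nonZeroDivisors ℤ) p₄
    set P₁ := IsLocalization.integerNormalization (nonZeroDivisors ℤ) p₁ with hP₁
    set P₂ := IsLocalization.integerNormalization (nonZeroDivisors ℤ) p₂ with hP₂
    set P₃ := IsLocalization.integerNormalization (nonZeroDivisors ℤ) p₃ with hP₃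
    set P₄ := IsLocalization.integerNormalization (nonZeroDivisors ℤ) p₄ with hP₄
    set β₁ := ((b₁ : ℤ)) with hβ₁
    set β₂ := ((b₂ : ℤ)) with hβ₂
    set β₃ := ((b₃ : ℤ)) with hβ₃
    set β₄ := ((b₄ : ℤ)) with hβ₄
    set B := β₁*β₂*β₃*β₄ with hB
    set q₁ : Polynomial ℤ := C ((N:ℤ) * (β₂*β₃*β₄)) * P₁ with hq₁
    set q₂ : Polynomial ℤ := C ((N:ℤ) * (β₁*β₃*β₄)) * P₂ with hq₂
    set q₃ : Polynomial ℤ := C ((N:ℤ) * (β₁*β₂*β₄)) * P₃ with hq₃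
    set q₄ : Polynomial ℤ := C ((N:ℤ) * (β₁*β₂*β₃)) * P₄ with hq₄
    have hinj : Function.Injective (Int.castRingHom ℚ) := by
      rw [Int.coe_castRingHom]
      exact Int.cast_injective
    have hbig : q₁^2 + q₂^2 + q₃^2 + q₄^2 = C (B^2) * G := by
      apply Polynomial.map_injective (Int.castRingHom ℚ) hinj
      simp only [hq₁, hq₂, hq₃, hq₄, Polynomial.map_add, Polynomial.map_pow,
        Polynomial.map_mul, Polynomial.map_C]
      have halg : (algebraMap ℤ ℚ) = Int.castRingHom ℚ := by rfl
      rw [← halg] at hGf ⊢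
      rw [hb₁, hb₂, hb₃, hb₄, hGf, hp]
      simp only [zsmul_eq_mul, hB, map_mul, map_pow, algebraMap_int_eq,
        eq_intCast, C_eq_intCast, C_eq_natCast]
      push_cast
      ring
    have hBne : B ≠ 0 := by
      simp only [hB]
      exact mul_ne_zero (mul_ne_zero (mul_ne_zero
        (nonZeroDivisors.coe_ne_zero b₁) (nonZeroDivisors.coe_ne_zero b₂))
        (nonZeroDivisors.coe_ne_zero b₃)) (nonZeroDivisors.coe_ne_zero b₄)
    have hnat : B.natAbs ≠ 0 := fun h => hBne (Int.natAbs_eq_zero.mp h)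
    obtain ⟨s, n', hn', hdec⟩ := Nat.exists_eq_pow_mul_and_not_dvd hnat 2 (by norm_num)
    have hoddn : Odd ((n' : ℤ) ^ 2) := by
      have hodd' : Odd n' := Nat.odd_iff.mpr (Nat.two_dvd_ne_zero.mp hn')
      exact ((Int.odd_coe_nat n').mpr hodd').pow
    have hB2 : (B : ℤ)^2 = 2^(2*s) * ((n' : ℤ))^2 := by
      have habs : B^2 = ((B.natAbs : ℤ))^2 := by
        rw [Int.natAbs_sq]
      rw [habs, hdec]
      push_cast
      ring
    refine key_lemma (2*k+1) hm G hG2 (2*s) ((n':ℤ)^2) hoddn q₁ q₂ q₃ q₄ ?_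
    rw [hbig, hB2, C_mul, C_pow,
      show (C (2:ℤ) : Polynomial ℤ) = 2 from map_ofNat C 2]
end

section
/- Let k be a nonnegative integer, let N be an odd natural number with N > 64, and let f_{k,N}(x) = (4/N^2)·x^{2(2k+1)} + (1/N^2)·x^{2k+1} + 4/N^2 ∈ ℚ[x]. Then for every integer ℓ ≥ 6, neither f_{k,N}(x) − 2^{−2ℓ} nor f_{k,N}(x) − 2^{−2ℓ}·x^{2(2k+1)} is a sum of four squares in ℚ[x]; moreover, the images of both of these polynomials in ℚ₂[x] are reducible (not irreducible) over ℚ₂. -/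
open Polynomial

lemma zmod8_aux : ∀ x y z : ZMod (2^3), 1 + x^2 + y^2 + z^2 ≠ 0 := by decide

lemma padicint_aux (b c d : ℤ_[2]) : 1 + b^2 + c^2 + d^2 ≠ 0 := by
  intro h
  have := congrArg (PadicInt.toZModPow (p := 2) 3) h
  push_cast [map_add, map_pow, map_one, map_zero] at this
  exact zmod8_aux _ _ _ this

lemma padic_aux (a b c d : ℚ_[2]) (ha : a ≠ 0) (hb : ‖b‖ ≤ ‖a‖) (hc : ‖c‖ ≤ ‖a‖)
    (hd : ‖d‖ ≤ ‖a‖) : a^2 + b^2 + c^2 + d^2 ≠ 0 := by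
  intro h
  have hb' : ‖b/a‖ ≤ 1 := by rw [norm_div]; exact div_le_one_of_le₀ hb (norm_nonneg a)
  have hc' : ‖c/a‖ ≤ 1 := by rw [norm_div]; exact div_le_one_of_le₀ hc (norm_nonneg a)
  have hd' : ‖d/a‖ ≤ 1 := by rw [norm_div]; exact div_le_one_of_le₀ hd (norm_nonneg a)
  set B : ℤ_[2] := ⟨b/a, hb'⟩
  set C : ℤ_[2] := ⟨c/a, hc'⟩
  set D : ℤ_[2] := ⟨d/a, hd'⟩
  apply padicint_aux B C D
  have h2 : ((1 + B^2 + C^2 + D^2 : ℤ_[2]) : ℚ_[2]) = (a^2+b^2+c^2+d^2)/a^2 := by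
    push_cast
    show 1 + (b/a)^2 + (c/a)^2 + (d/a)^2 = _
    field_simp
  rw [h, zero_div] at h2
  exact PadicInt.coe_eq_zero.mp h2

lemma padic_zero_first (a b c d : ℚ_[2]) (h : a^2+b^2+c^2+d^2 = 0) : a = 0 := by
  by_contra ha
  have ha' : 0 < ‖a‖ := norm_pos_iff.mpr ha
  have hle : ∀ x ∈ [a,b,c,d], ‖x‖ ≤ max (max ‖a‖ ‖b‖) (max ‖c‖ ‖d‖) := by
    intro x hx
    simp only [List.mem_cons, List.not_mem_nil, or_false] at hx
    rcases hx with rfl|rfl|rfl|rfl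
    · exact le_max_of_le_left (le_max_left _ _)
    · exact le_max_of_le_left (le_max_right _ _)
    · exact le_max_of_le_right (le_max_left _ _)
    · exact le_max_of_le_right (le_max_right _ _)
  have hpos : 0 < max (max ‖a‖ ‖b‖) (max ‖c‖ ‖d‖) :=
    lt_of_lt_of_le ha' (hle a (by simp))
  rcases max_choice (max ‖a‖ ‖b‖) (max ‖c‖ ‖d‖) with h1 | h1 <;> rw [h1] at hle hpos
  · rcases max_choice ‖a‖ ‖b‖ with h2 | h2 <;> rw [h2] at hle hpos
    · exact padic_aux a b c d (norm_pos_iff.mp hpos) (hle b (by simp)) (hle c (by simp))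
        (hle d (by simp)) h
    · exact padic_aux b a c d (norm_pos_iff.mp hpos) (hle a (by simp)) (hle c (by simp))
        (hle d (by simp)) (by linear_combination h)
  · rcases max_choice ‖c‖ ‖d‖ with h2 | h2 <;> rw [h2] at hle hpos
    · exact padic_aux c a b d (norm_pos_iff.mp hpos) (hle a (by simp)) (hle b (by simp))
        (hle d (by simp)) (by linear_combination h)
    · exact padic_aux d a b c (norm_pos_iff.mp hpos) (hle a (by simp)) (hle b (by simp))
        (hle c (by simp)) (by linear_combination h)

lemma aniso4 (a b c d : ℚ_[2]) (h : a^2 + b^2 + c^2 + d^2 = 0) :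
    a = 0 ∧ b = 0 ∧ c = 0 ∧ d = 0 :=
  ⟨padic_zero_first a b c d h, padic_zero_first b a c d (by linear_combination h),
   padic_zero_first c a b d (by linear_combination h),
   padic_zero_first d a b c (by linear_combination h)⟩

variable {F : Type*} [Field F]

lemma oddFactor : ∀ n (p : F[X]), p.natDegree = n → p ≠ 0 → Odd p.natDegree →
    ∃ q : F[X], q.Monic ∧ Irreducible q ∧ Odd q.natDegree ∧ q ∣ p := by
  intro n
  induction n using Nat.strong_induction_on with
  | _ n ih =>
    intro p hn hp0 hodd
    have hnu : ¬ IsUnit p := by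
      intro hu
      rw [Polynomial.natDegree_eq_zero_of_isUnit hu] at hodd
      simpa using hodd
    obtain ⟨q, hqm, hqi, hqd⟩ := p.exists_monic_irreducible_factor hnu
    by_cases hq : Odd q.natDegree
    · exact ⟨q, hqm, hqi, hq, hqd⟩
    · obtain ⟨t, ht⟩ := hqd
      have hq0 : q ≠ 0 := hqi.ne_zero
      have ht0 : t ≠ 0 := by rintro rfl; exact hp0 (by simp [ht])
      have hdeg : p.natDegree = q.natDegree + t.natDegree := by
        rw [ht, natDegree_mul hq0 ht0]
      have hqpos : 0 < q.natDegree := hqi.natDegree_pos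
      have htodd : Odd t.natDegree := by
        have h1 := Nat.odd_iff.mp hodd
        have h2 := Nat.even_iff.mp (Nat.not_odd_iff_even.mp hq)
        rw [Nat.odd_iff]
        omega
      have hlt : t.natDegree < n := by omega
      obtain ⟨q', h1, h2, h3, h4⟩ := ih t.natDegree hlt t rfl ht0 htodd
      exact ⟨q', h1, h2, h3, h4.trans ⟨q, by rw [ht]; ring⟩⟩

lemma sq_coeff (g : F[X]) (d : ℕ) (h : g.natDegree ≤ d) : (g^2).coeff (2*d) = (g.coeff d)^2 := by
  rcases lt_or_eq_of_le h with h | h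
  · rw [coeff_eq_zero_of_natDegree_lt h, coeff_eq_zero_of_natDegree_lt]
    · ring
    · calc (g^2).natDegree ≤ 2 * g.natDegree := natDegree_pow_le
      _ < 2*d := by omega
  · subst h
    rw [sq, sq, two_mul, coeff_mul_degree_add_degree, leadingCoeff]

lemma springer (haniso : ∀ a b c d : F, a^2+b^2+c^2+d^2 = 0 → a=0∧b=0∧c=0∧d=0) :
    ∀ n (q : F[X]), q.Monic → Irreducible q → Odd q.natDegree → q.natDegree = n →
    ∀ g₁ g₂ g₃ g₄ : F[X], g₁.natDegree < q.natDegree → g₂.natDegree < q.natDegree →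
    g₃.natDegree < q.natDegree → g₄.natDegree < q.natDegree →
    q ∣ (g₁^2 + g₂^2 + g₃^2 + g₄^2) → g₁ = 0 ∧ g₂ = 0 ∧ g₃ = 0 ∧ g₄ = 0 := by
  intro n
  induction n using Nat.strong_induction_on with
  | _ n ih =>
    intro q hqm hqi hqodd hqn g₁ g₂ g₃ g₄ hd₁ hd₂ hd₃ hd₄ hdvd
    classical
    have hq0 : q ≠ 0 := hqi.ne_zero
    have hqpos : 0 < q.natDegree := hqi.natDegree_pos
    have hqprime : Prime q := UniqueFactorizationMonoid.irreducible_iff_prime.mp hqi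
    by_contra hcon
    have hex : g₁ ≠ 0 ∨ g₂ ≠ 0 ∨ g₃ ≠ 0 ∨ g₄ ≠ 0 := by tauto
    clear hcon
    set e : F[X] := EuclideanDomain.gcd (EuclideanDomain.gcd (EuclideanDomain.gcd g₁ g₂) g₃) g₄
      with he_def
    have he₁ : e ∣ g₁ :=
      ((EuclideanDomain.gcd_dvd_left _ _).trans (EuclideanDomain.gcd_dvd_left _ _)).trans
        (EuclideanDomain.gcd_dvd_left _ _)
    have he₂ : e ∣ g₂ :=
      ((EuclideanDomain.gcd_dvd_left _ _).trans (EuclideanDomain.gcd_dvd_left _ _)).trans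
        (EuclideanDomain.gcd_dvd_right _ _)
    have he₃ : e ∣ g₃ := (EuclideanDomain.gcd_dvd_left _ _).trans (EuclideanDomain.gcd_dvd_right _ _)
    have he₄ : e ∣ g₄ := EuclideanDomain.gcd_dvd_right _ _
    have hedvd : ∀ r : F[X], r ∣ g₁ → r ∣ g₂ → r ∣ g₃ → r ∣ g₄ → r ∣ e := fun r h1 h2 h3 h4 =>
      EuclideanDomain.dvd_gcd (EuclideanDomain.dvd_gcd (EuclideanDomain.dvd_gcd h1 h2) h3) h4
    have he0 : e ≠ 0 := by
      intro h0
      rw [he_def] at h0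
      rcases hex with h|h|h|h <;>
      · apply h
        simp only [EuclideanDomain.gcd_eq_zero_iff] at h0
        tauto
    obtain ⟨g₁', hg₁'⟩ := he₁
    obtain ⟨g₂', hg₂'⟩ := he₂
    obtain ⟨g₃', hg₃'⟩ := he₃
    obtain ⟨g₄', hg₄'⟩ := he₄
    -- coprimality of the reduced vector
    have hcop : ∀ r : F[X], r ∣ g₁' → r ∣ g₂' → r ∣ g₃' → r ∣ g₄' → IsUnit r := by
      intro r h1 h2 h3 h4
      have : e * r ∣ e := hedvd (e*r)
        (hg₁' ▸ mul_dvd_mul_left e h1) (hg₂' ▸ mul_dvd_mul_left e h2)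
        (hg₃' ▸ mul_dvd_mul_left e h3) (hg₄' ▸ mul_dvd_mul_left e h4)
      obtain ⟨t, ht⟩ := this
      have : e * 1 = e * (r * t) := by rw [mul_one]; rw [mul_assoc] at ht; exact ht
      exact IsUnit.of_mul_eq_one (a := r) t (mul_left_cancel₀ he0 this).symm
    have hex' : g₁' ≠ 0 ∨ g₂' ≠ 0 ∨ g₃' ≠ 0 ∨ g₄' ≠ 0 := by
      rcases hex with h|h|h|h
      · exact Or.inl (by rintro rfl; exact h (by simp [hg₁']))
      · exact Or.inr (Or.inl (by rintro rfl; exact h (by simp [hg₂'])))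
      · exact Or.inr (Or.inr (Or.inl (by rintro rfl; exact h (by simp [hg₃']))))
      · exact Or.inr (Or.inr (Or.inr (by rintro rfl; exact h (by simp [hg₄']))))
    set S' : F[X] := g₁'^2 + g₂'^2 + g₃'^2 + g₄'^2 with hS'_def
    have hdvdS' : q ∣ S' := by
      have hfac : g₁^2+g₂^2+g₃^2+g₄^2 = e^2 * S' := by
        rw [hS'_def, hg₁', hg₂', hg₃', hg₄']; ring
      rw [hfac] at hdvd
      rcases (hqprime.dvd_mul.mp hdvd) with h | h
      · exfalso
        rcases hex with hx|hx|hx|hx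
        · have h1 : e.natDegree ≤ g₁.natDegree := natDegree_le_of_dvd ⟨g₁', hg₁'⟩ hx
          have h2 : q.natDegree ≤ e.natDegree :=
            natDegree_le_of_dvd (hqprime.dvd_of_dvd_pow h) he0
          omega
        · have h1 : e.natDegree ≤ g₂.natDegree := natDegree_le_of_dvd ⟨g₂', hg₂'⟩ hx
          have h2 : q.natDegree ≤ e.natDegree :=
            natDegree_le_of_dvd (hqprime.dvd_of_dvd_pow h) he0
          omega
        · have h1 : e.natDegree ≤ g₃.natDegree := natDegree_le_of_dvd ⟨g₃', hg₃'⟩ hx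
          have h2 : q.natDegree ≤ e.natDegree :=
            natDegree_le_of_dvd (hqprime.dvd_of_dvd_pow h) he0
          omega
        · have h1 : e.natDegree ≤ g₄.natDegree := natDegree_le_of_dvd ⟨g₄', hg₄'⟩ hx
          have h2 : q.natDegree ≤ e.natDegree :=
            natDegree_le_of_dvd (hqprime.dvd_of_dvd_pow h) he0
          omega
      · exact h
    have hdg' : ∀ (a : F[X]) (b : F[X]), e * b = a → a.natDegree < q.natDegree →
        b.natDegree < q.natDegree := by
      intro a b hab ha
      by_cases hb : b = 0
      · simpa [hb] using hqpos
      · have : a.natDegree = e.natDegree + b.natDegree := by rw [← hab, natDegree_mul he0 hb]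
        omega
    have hd₁' := hdg' _ _ hg₁'.symm hd₁
    have hd₂' := hdg' _ _ hg₂'.symm hd₂
    have hd₃' := hdg' _ _ hg₃'.symm hd₃
    have hd₄' := hdg' _ _ hg₄'.symm hd₄
    set d : ℕ := max (max g₁'.natDegree g₂'.natDegree) (max g₃'.natDegree g₄'.natDegree)
      with hd_def
    have hdle₁ : g₁'.natDegree ≤ d := le_max_of_le_left (le_max_left _ _)
    have hdle₂ : g₂'.natDegree ≤ d := le_max_of_le_left (le_max_right _ _)
    have hdle₃ : g₃'.natDegree ≤ d := le_max_of_le_right (le_max_left _ _)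
    have hdle₄ : g₄'.natDegree ≤ d := le_max_of_le_right (le_max_right _ _)
    have hdlt : d < q.natDegree := max_lt (max_lt hd₁' hd₂') (max_lt hd₃' hd₄')
    have hcoeff : S'.coeff (2*d) =
        (g₁'.coeff d)^2 + (g₂'.coeff d)^2 + (g₃'.coeff d)^2 + (g₄'.coeff d)^2 := by
      rw [hS'_def]
      simp only [coeff_add]
      rw [sq_coeff _ _ hdle₁, sq_coeff _ _ hdle₂, sq_coeff _ _ hdle₃, sq_coeff _ _ hdle₄]
    have hlead : ∀ a : F[X], a ≠ 0 → a.natDegree = d → a.coeff d ≠ 0 := by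
      intro a ha had
      rw [← had]
      exact mt leadingCoeff_eq_zero.mp ha
    have hcne : S'.coeff (2*d) ≠ 0 := by
      rw [hcoeff]
      intro h0
      obtain ⟨z1, z2, z3, z4⟩ := haniso _ _ _ _ h0
      have hdeq : d = g₁'.natDegree ∨ d = g₂'.natDegree ∨ d = g₃'.natDegree ∨
          d = g₄'.natDegree := by
        rw [hd_def]; omega
      by_cases hd0 : d = 0
      · rcases hex' with h|h|h|h
        · exact hlead _ h (by omega) z1
        · exact hlead _ h (by omega) z2
        · exact hlead _ h (by omega) z3
        · exact hlead _ h (by omega) z4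
      · rcases hdeq with h|h|h|h
        · refine hlead g₁' (fun hz => ?_) h.symm z1
          rw [hz, natDegree_zero] at h; omega
        · refine hlead g₂' (fun hz => ?_) h.symm z2
          rw [hz, natDegree_zero] at h; omega
        · refine hlead g₃' (fun hz => ?_) h.symm z3
          rw [hz, natDegree_zero] at h; omega
        · refine hlead g₄' (fun hz => ?_) h.symm z4
          rw [hz, natDegree_zero] at h; omega
    have hS'0 : S' ≠ 0 := fun h0 => hcne (by rw [h0]; simp)
    have hS'deg : S'.natDegree = 2*d := by
      have hle : S'.natDegree ≤ 2*d := by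
        rw [hS'_def]
        refine (natDegree_add_le _ _).trans (max_le ((natDegree_add_le _ _).trans
          (max_le ((natDegree_add_le _ _).trans (max_le ?_ ?_)) ?_)) ?_) <;>
        · exact natDegree_pow_le.trans (by omega)
      have hge : 2*d ≤ S'.natDegree := le_natDegree_of_ne_zero hcne
      omega
    obtain ⟨t, ht⟩ := hdvdS'
    have ht0 : t ≠ 0 := by rintro rfl; rw [mul_zero] at ht; exact hS'0 ht
    have htdeg : S'.natDegree = q.natDegree + t.natDegree := by rw [ht, natDegree_mul hq0 ht0]
    have htodd : Odd t.natDegree := by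
      have h1 := Nat.odd_iff.mp hqodd
      rw [Nat.odd_iff]
      omega
    obtain ⟨q', hq'm, hq'i, hq'odd, hq'dvd⟩ := oddFactor t.natDegree t rfl ht0 htodd
    have hq'n : q'.natDegree < n := by
      have := natDegree_le_of_dvd hq'dvd ht0
      omega
    have hq'S' : q' ∣ S' := hq'dvd.trans ⟨q, by rw [ht]; ring⟩
    -- reduce mod q'
    set r₁ := g₁' %ₘ q' with hr₁
    set r₂ := g₂' %ₘ q' with hr₂
    set r₃ := g₃' %ₘ q' with hr₃
    set r₄ := g₄' %ₘ q' with hr₄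
    have hmod : ∀ g : F[X], (g %ₘ q').natDegree < q'.natDegree := by
      intro g
      by_cases h : g %ₘ q' = 0
      · rw [h]; simpa using hq'i.natDegree_pos
      · exact natDegree_lt_natDegree h (degree_modByMonic_lt g hq'm)
    have he₁' := (modByMonic_add_div g₁' q').symm
    have he₂' := (modByMonic_add_div g₂' q').symm
    have he₃' := (modByMonic_add_div g₃' q').symm
    have he₄' := (modByMonic_add_div g₄' q').symm
    have hq'r : q' ∣ r₁^2 + r₂^2 + r₃^2 + r₄^2 := by
      have hkey : r₁^2 + r₂^2 + r₃^2 + r₄^2 = S' - q' *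
          ((2*r₁*(g₁' /ₘ q') + q'*(g₁' /ₘ q')^2) + (2*r₂*(g₂' /ₘ q') + q'*(g₂' /ₘ q')^2) +
           (2*r₃*(g₃' /ₘ q') + q'*(g₃' /ₘ q')^2) + (2*r₄*(g₄' /ₘ q') + q'*(g₄' /ₘ q')^2)) := by
        rw [hS'_def]
        linear_combination (-(g₁' + (r₁ + q' * (g₁' /ₘ q')))) * he₁'
          + (-(g₂' + (r₂ + q' * (g₂' /ₘ q')))) * he₂'
          + (-(g₃' + (r₃ + q' * (g₃' /ₘ q')))) * he₃'
          + (-(g₄' + (r₄ + q' * (g₄' /ₘ q')))) * he₄'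
      rw [hkey]
      exact dvd_sub hq'S' (dvd_mul_right _ _)
    obtain ⟨z1, z2, z3, z4⟩ := ih q'.natDegree hq'n q' hq'm hq'i hq'odd rfl r₁ r₂ r₃ r₄
      (hmod _) (hmod _) (hmod _) (hmod _) hq'r
    exact hq'i.not_isUnit (hcop q'
      ((modByMonic_eq_zero_iff_dvd hq'm).mp z1) ((modByMonic_eq_zero_iff_dvd hq'm).mp z2)
      ((modByMonic_eq_zero_iff_dvd hq'm).mp z3) ((modByMonic_eq_zero_iff_dvd hq'm).mp z4))

lemma keyM (haniso : ∀ a b c d : F, a^2+b^2+c^2+d^2 = 0 → a=0∧b=0∧c=0∧d=0)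
    (q : F[X]) (hqm : q.Monic) (hqi : Irreducible q) (hqodd : Odd q.natDegree)
    (p₁ p₂ p₃ p₄ : F[X]) (hdvd : q ∣ p₁^2 + p₂^2 + p₃^2 + p₄^2)
    (hndvd : ¬ (q*q ∣ p₁^2 + p₂^2 + p₃^2 + p₄^2)) : False := by
  have hmod : ∀ g : F[X], (g %ₘ q).natDegree < q.natDegree := by
    intro g
    by_cases h : g %ₘ q = 0
    · rw [h]; simpa using hqi.natDegree_pos
    · exact natDegree_lt_natDegree h (degree_modByMonic_lt g hqm)
  have he₁ := (modByMonic_add_div p₁ q).symm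
  have he₂ := (modByMonic_add_div p₂ q).symm
  have he₃ := (modByMonic_add_div p₃ q).symm
  have he₄ := (modByMonic_add_div p₄ q).symm
  set r₁ := p₁ %ₘ q; set r₂ := p₂ %ₘ q; set r₃ := p₃ %ₘ q; set r₄ := p₄ %ₘ q
  have hq'r : q ∣ r₁^2 + r₂^2 + r₃^2 + r₄^2 := by
    have hkey : r₁^2 + r₂^2 + r₃^2 + r₄^2 = (p₁^2 + p₂^2 + p₃^2 + p₄^2) - q *
        ((2*r₁*(p₁ /ₘ q) + q*(p₁ /ₘ q)^2) + (2*r₂*(p₂ /ₘ q) + q*(p₂ /ₘ q)^2) +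
         (2*r₃*(p₃ /ₘ q) + q*(p₃ /ₘ q)^2) + (2*r₄*(p₄ /ₘ q) + q*(p₄ /ₘ q)^2)) := by
      linear_combination (-(p₁ + (r₁ + q * (p₁ /ₘ q)))) * he₁
        + (-(p₂ + (r₂ + q * (p₂ /ₘ q)))) * he₂
        + (-(p₃ + (r₃ + q * (p₃ /ₘ q)))) * he₃
        + (-(p₄ + (r₄ + q * (p₄ /ₘ q)))) * he₄
    rw [hkey]
    exact dvd_sub hdvd (dvd_mul_right _ _)
  obtain ⟨z1, z2, z3, z4⟩ := springer haniso q.natDegree q hqm hqi hqodd rfl r₁ r₂ r₃ r₄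
    (hmod _) (hmod _) (hmod _) (hmod _) hq'r
  apply hndvd
  obtain ⟨t₁, ht₁⟩ := (modByMonic_eq_zero_iff_dvd hqm).mp z1
  obtain ⟨t₂, ht₂⟩ := (modByMonic_eq_zero_iff_dvd hqm).mp z2
  obtain ⟨t₃, ht₃⟩ := (modByMonic_eq_zero_iff_dvd hqm).mp z3
  obtain ⟨t₄, ht₄⟩ := (modByMonic_eq_zero_iff_dvd hqm).mp z4
  exact ⟨t₁^2+t₂^2+t₃^2+t₄^2, by rw [ht₁, ht₂, ht₃, ht₄]; ring⟩

lemma quadFactor {K : Type*} [Field K] (h2 : (2:K) ≠ 0) (a b c s : K) (ha : a ≠ 0) (hs : s^2 = b^2 - 4*a*c)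
    (m : ℕ) :
    C a * X^(2*m) + C b * X^m + C c =
      C a * ((X^m - C ((-b+s)/(2*a))) * (X^m - C ((-b-s)/(2*a)))) := by
  set α := (-b+s)/(2*a) with hα
  set β := (-b-s)/(2*a) with hβ
  have hden : (2*a : K) ≠ 0 := mul_ne_zero h2 ha
  have hden2 : ((2*a)*(2*a) : K) ≠ 0 := mul_ne_zero hden hden
  have h1 : a*(α+β) = -b := by
    rw [hα, hβ, ← add_div, mul_div_assoc', div_eq_iff hden]
    ring
  have h2' : a*(α*β) = c := by
    rw [hα, hβ, div_mul_div_comm, mul_div_assoc', div_eq_iff hden2]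
    linear_combination (-a) * hs
  have expand : C a * ((X^m - C α) * (X^m - C β)) =
      C a * (X^m*X^m) - C (a*(α+β)) * X^m + C (a*(α*β)) := by
    simp only [C_mul, C_add]; ring
  rw [expand, h1, h2', ← pow_add, two_mul, map_neg]
  ring

lemma key_not_sum (m : ℕ) (hmodd : Odd m) (a α β : ℚ_[2]) (ha : a ≠ 0) (hα : α ≠ 0)
    (hαβ : α ≠ β) (p₁ p₂ p₃ p₄ : ℚ_[2][X]) :
    C a * ((X^m - C α) * (X^m - C β)) ≠ p₁^2 + p₂^2 + p₃^2 + p₄^2 := by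
  intro heq
  have hm0 : 0 < m := hmodd.pos
  have hmne : (m : ℚ_[2]) ≠ 0 := Nat.cast_ne_zero.mpr (by omega)
  have hP : (X^m - C α : ℚ_[2][X]) ≠ 0 := by
    intro h0
    have := natDegree_X_pow_sub_C (n := m) (r := α) (R := ℚ_[2])
    rw [h0, natDegree_zero] at this
    omega
  have hPdeg : (X^m - C α : ℚ_[2][X]).natDegree = m := natDegree_X_pow_sub_C
  have hPodd : Odd (X^m - C α : ℚ_[2][X]).natDegree := by rw [hPdeg]; exact hmodd
  obtain ⟨q, hqm, hqi, hqodd, hqdvd⟩ := oddFactor _ (X^m - C α) rfl hP hPodd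
  have hqprime : Prime q := UniqueFactorizationMonoid.irreducible_iff_prime.mp hqi
  -- q does not divide X^m - C β
  have hqnotQ : ¬ q ∣ (X^m - C β) := by
    intro hdvd
    have : q ∣ C (α - β) := by
      have : (C (α - β) : ℚ_[2][X]) = (X^m - C β) - (X^m - C α) := by
        rw [map_sub]; ring
      rw [this]
      exact dvd_sub hdvd hqdvd
    have hc0 : (α - β) ≠ 0 := sub_ne_zero_of_ne hαβ
    have := natDegree_le_of_dvd this (C_ne_zero.mpr hc0)
    rw [natDegree_C] at this
    have := hqi.natDegree_pos
    omega
  have hsf : (X^m - C α : ℚ_[2][X]).Separable := separable_X_pow_sub_C α hmne hα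
  have hsq : Squarefree (X^m - C α : ℚ_[2][X]) := hsf.squarefree
  -- q ∣ sum, q*q does not divide sum
  have hdvdsum : q ∣ p₁^2 + p₂^2 + p₃^2 + p₄^2 := by
    rw [← heq]
    exact Dvd.dvd.trans hqdvd ⟨C a * (X^m - C β), by ring⟩
  have hndvd : ¬ (q*q ∣ p₁^2 + p₂^2 + p₃^2 + p₄^2) := by
    rw [← heq]
    intro hdvd
    have hCa : IsUnit (C a : ℚ_[2][X]) := isUnit_C.mpr ha.isUnit
    have hdvd2 : q*q ∣ (X^m - C α) * (X^m - C β) := (hCa.dvd_mul_left).mp hdvd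
    -- deduce q*q ∣ (X^m - C α)
    obtain ⟨t, ht⟩ := hdvd2
    obtain ⟨P', hP'⟩ := hqdvd
    have hstep : q ∣ P' * (X^m - C β) := by
      refine ⟨t, ?_⟩
      apply mul_left_cancel₀ hqi.ne_zero
      rw [← mul_assoc, ← hP', ht]; ring
    have hqP' : q ∣ P' := (hqprime.dvd_mul.mp hstep).resolve_right hqnotQ
    have : q * q ∣ (X^m - C α) := by
      obtain ⟨u, hu⟩ := hqP'
      exact ⟨u, by rw [hP', hu]; ring⟩
    exact hqi.not_isUnit (hsq q this)
  exact keyM aniso4 q hqm hqi hqodd p₁ p₂ p₃ p₄ hdvdsum hndvd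

lemma key_not_irred (m : ℕ) (hm0 : 0 < m) (a α β : ℚ_[2]) (ha : a ≠ 0) :
    ¬ Irreducible (C a * ((X^m - C α) * (X^m - C β))) := by
  intro hirr
  have h1 : (C a * (X^m - C α) : ℚ_[2][X]).natDegree = m := by
    rw [natDegree_C_mul ha, natDegree_X_pow_sub_C]
  have h2 : (X^m - C β : ℚ_[2][X]).natDegree = m := natDegree_X_pow_sub_C
  rcases hirr.isUnit_or_isUnit (show C a * ((X^m - C α) * (X^m - C β)) =
      (C a * (X^m - C α)) * (X^m - C β) by ring) with h | h
  · exact not_isUnit_of_natDegree_pos _ (by omega) h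
  · exact not_isUnit_of_natDegree_pos _ (by omega) h

lemma sqrt_exists (u : ℤ_[2]) (h : ‖1 - u‖ ≤ 1/8) : ∃ z : ℤ_[2], z^2 = u := by
  have hfact : Fact (Nat.Prime 2) := ⟨Nat.prime_two⟩
  set F : Polynomial ℤ_[2] := X^2 - C u with hF
  have heval : F.eval 1 = 1 - u := by simp [hF]
  have hderiv : F.derivative.eval 1 = 2 := by
    simp [hF, derivative_X_pow]
    norm_num
  have hnorm2 : ‖(2 : ℤ_[2])‖ = 1/2 := by
    have := PadicInt.norm_p (p := 2)
    norm_num at this ⊢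
    exact_mod_cast this
  have hnorm : ‖F.eval 1‖ < ‖F.derivative.eval 1‖^2 := by
    rw [heval, hderiv, hnorm2]
    calc ‖(1:ℤ_[2]) - u‖ ≤ 1/8 := h
    _ < (1/2)^2 := by norm_num
  obtain ⟨z, hz, -⟩ := hensels_lemma hnorm
  refine ⟨z, ?_⟩
  have h0 : z^2 - u = 0 := by simpa [hF] using hz
  linear_combination h0

lemma alg2 {K : Type*} [Field K] (n2 t : K) (hn : n2 ≠ 0) (ht : t ≠ 0) :
    (1/n2)^2 - 4*(4/n2)*((4/n2) - (1/t)) = (16*n2 - 63*t)/(t*n2^2) := by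
  field_simp
  ring

theorem fkN_minus_powers_not_sum_of_four_squares_and_reducible
    (k N : ℕ) (hN : Odd N) (hN64 : 64 < N)
    (f : Polynomial ℚ)
    (hf : f = C (4 / (N : ℚ) ^ 2) * X ^ (2 * (2 * k + 1)) +
              C (1 / (N : ℚ) ^ 2) * X ^ (2 * k + 1) +
              C (4 / (N : ℚ) ^ 2))
    (ℓ : ℕ) (hℓ : 6 ≤ ℓ) :
    (¬ ∃ p₁ p₂ p₃ p₄ : Polynomial ℚ,
        f - C ((1 : ℚ) / 2 ^ (2 * ℓ)) = p₁ ^ 2 + p₂ ^ 2 + p₃ ^ 2 + p₄ ^ 2) ∧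
    (¬ ∃ p₁ p₂ p₃ p₄ : Polynomial ℚ,
        f - C ((1 : ℚ) / 2 ^ (2 * ℓ)) * X ^ (2 * (2 * k + 1)) =
          p₁ ^ 2 + p₂ ^ 2 + p₃ ^ 2 + p₄ ^ 2) ∧
    ¬ Irreducible ((f - C ((1 : ℚ) / 2 ^ (2 * ℓ))).map (Rat.castHom ℚ_[2])) ∧
    ¬ Irreducible ((f - C ((1 : ℚ) / 2 ^ (2 * ℓ)) * X ^ (2 * (2 * k + 1))).map
        (Rat.castHom ℚ_[2])) := by
  subst hf
  set K := ℚ_[2]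
  letI : CommRing K := inferInstanceAs (CommRing ℚ_[2])
  set m : ℕ := 2 * k + 1 with hm_def
  have hmodd : Odd m := ⟨k, by omega⟩
  have hm0 : 0 < m := by omega
  set φ : ℚ →+* K := Rat.castHom K with hφ
  have hN0 : (N : ℚ) ≠ 0 := Nat.cast_ne_zero.mpr (by omega)
  have hNK : (N : K) ≠ 0 := Nat.cast_ne_zero.mpr (by omega)
  have h2K : (2 : K) ≠ 0 := two_ne_zero
  set A : K := 4 / (N : K)^2 with hA_def
  set B : K := 1 / (N : K)^2 with hB_def
  set E : K := 1 / 2^(2*ℓ) with hE_def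
  have hA : A ≠ 0 := by
    rw [hA_def]
    exact div_ne_zero (by norm_num) (pow_ne_zero _ hNK)
  have hAE : A - E ≠ 0 := by
    have hr : (4/(N:ℚ)^2 - 1/2^(2*ℓ)) ≠ 0 := by
      intro h0
      have h1 : (4:ℚ) * 2^(2*ℓ) = (N:ℚ)^2 := by
        field_simp at h0
        linarith [h0]
      have h2 : (4 * 2^(2*ℓ) : ℕ) = N^2 := by exact_mod_cast h1
      have he : Even (4 * 2^(2*ℓ) : ℕ) := ⟨2 * 2^(2*ℓ), by ring⟩
      have ho : Odd (N^2) := hN.pow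
      rw [h2] at he
      exact (Nat.not_even_iff_odd.mpr ho) he
    have : A - E = ((4/(N:ℚ)^2 - 1/2^(2*ℓ) : ℚ) : K) := by
      rw [hA_def, hE_def]
      push_cast
      ring
    rw [this]
    exact Rat.cast_ne_zero.mpr hr
  -- construct the 2-adic square root
  set u : ℤ := (N:ℤ)^2 - 63 * 2^(2*ℓ-4) with hu_def
  have hu8 : ‖1 - (u : ℤ_[2])‖ ≤ 1/8 := by
    obtain ⟨j, hj⟩ := hN
    obtain ⟨c, hc⟩ := Int.even_mul_succ_self (j:ℤ)
    have hdvd : (8:ℤ) ∣ (1 - u) := by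
      have h1 : (8:ℤ) ∣ ((N:ℤ)^2 - 1) := ⟨c, by
        have : (N:ℤ) = 2*(j:ℤ)+1 := by exact_mod_cast congrArg (Nat.cast : ℕ → ℤ) hj
        rw [this]
        linear_combination 4 * hc⟩
      have h2 : (8:ℤ) ∣ (63 * 2^(2*ℓ-4)) := by
        have : 2*ℓ-4 = 3 + (2*ℓ-7) := by omega
        rw [this, pow_add]
        exact ⟨63 * 2^(2*ℓ-7), by ring⟩
      have : (1:ℤ) - u = -((N:ℤ)^2 - 1) + 63 * 2^(2*ℓ-4) := by rw [hu_def]; ring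
      rw [this]
      exact dvd_add (Dvd.dvd.neg_right h1) h2
    obtain ⟨w, hw⟩ := hdvd
    have hcast : (1 : ℤ_[2]) - (u : ℤ_[2]) = ((8:ℤ_[2])) * ((w:ℤ_[2])) := by
      exact_mod_cast congrArg (fun x : ℤ => (x : ℤ_[2])) hw
    rw [hcast, norm_mul]
    have h8 : ‖(8:ℤ_[2])‖ = 1/8 := by
      have : (8:ℤ_[2]) = 2^3 := by norm_num
      rw [this, norm_pow]
      have hp := PadicInt.norm_p (p := 2)
      rw [show ((2:ℕ):ℤ_[2]) = (2:ℤ_[2]) by norm_num] at hp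
      rw [hp]
      norm_num
    rw [h8]
    calc 1/8 * ‖(w:ℤ_[2])‖ ≤ 1/8 * 1 := by
          have := PadicInt.norm_le_one (w:ℤ_[2])
          nlinarith [norm_nonneg ((w:ℤ_[2]))]
      _ = 1/8 := by norm_num
  obtain ⟨z, hz⟩ := sqrt_exists (u : ℤ_[2]) hu8
  have huodd : Odd u := by
    rw [hu_def]
    have : Odd ((N:ℤ)^2) := (Int.odd_coe_nat N |>.mpr hN).pow
    have he : Even (63 * (2:ℤ)^(2*ℓ-4)) := by
      have h4 : 2*ℓ-4 = 1 + (2*ℓ-5) := by omega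
      exact ⟨63 * 2^(2*ℓ-5) , by rw [h4, pow_add]; ring⟩
    rcases this with ⟨t, ht⟩
    rcases he with ⟨v, hv⟩
    exact ⟨t - v, by rw [ht, hv]; ring⟩
  have hu0 : (u : ℤ_[2]) ≠ 0 := by
    have : u ≠ 0 := by
      intro h0
      rw [h0] at huodd
      simp at huodd
    exact_mod_cast Int.cast_ne_zero.mpr this
  have hz0 : z ≠ 0 := by
    intro h0
    rw [h0] at hz
    exact hu0 (by rw [← hz]; ring)
  set zK : K := (z : K) with hzK_def
  have hzK0 : zK ≠ 0 := PadicInt.coe_ne_zero.mpr hz0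
  have hzK2 : zK^2 = ((u : ℤ) : K) := by
    rw [hzK_def]
    have := congrArg (fun x : ℤ_[2] => (x : K)) hz
    push_cast at this
    exact_mod_cast this
  set s : K := 4 * zK / (2^ℓ * (N:K)^2) with hs_def
  have hs0 : s ≠ 0 := by
    rw [hs_def]
    exact div_ne_zero (by simp [hzK0]) (mul_ne_zero (pow_ne_zero _ h2K) (pow_ne_zero _ hNK))
  have key16 : (16:K) * ((u:ℤ):K) = 16*(N:K)^2 - 63*(2:K)^(2*ℓ) := by
    have hcast : ((u:ℤ):K) = (N:K)^2 - 63*(2:K)^(2*ℓ-4) := by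
      rw [hu_def, Int.cast_sub, Int.cast_mul, Int.cast_pow]; push_cast; ring
    have hexp : (2:K)^(2*ℓ) = 16 * (2:K)^(2*ℓ-4) := by
      have h4 : 2*ℓ = 4 + (2*ℓ-4) := by omega
      rw [h4, pow_add]
      norm_num
    rw [hcast, hexp]
    ring
  have hs₁ : s^2 = B^2 - 4*A*(A-E) := by
    have e1 : s^2 = (16*((u:ℤ):K)) / ((2:K)^(2*ℓ) * (N:K)^4) := by
      rw [hs_def, div_pow]
      congr 1
      · rw [mul_pow, hzK2]; norm_num
      · rw [mul_pow, ← pow_mul, ← pow_mul]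
        ring_nf
    have e2 : B^2 - 4*A*(A-E) = (16*(N:K)^2 - 63*(2:K)^(2*ℓ)) / ((2:K)^(2*ℓ) * (N:K)^4) := by
      rw [hA_def, hB_def, hE_def]
      rw [alg2 ((N:K)^2) ((2:K)^(2*ℓ)) (pow_ne_zero _ hNK) (pow_ne_zero _ h2K)]
      rw [← pow_mul]
      try norm_num
    rw [e1, e2, key16]
  have hs₂ : s^2 = B^2 - 4*(A-E)*A := by rw [hs₁]; ring
  -- roots
  set α₁ : K := (-B + s)/(2*A) with hα₁_def
  set β₁ : K := (-B - s)/(2*A) with hβ₁_def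
  set α₂ : K := (-B + s)/(2*(A-E)) with hα₂_def
  set β₂ : K := (-B - s)/(2*(A-E)) with hβ₂_def
  have hden₁ : (2*A : K) ≠ 0 := mul_ne_zero h2K hA
  have hden₂ : (2*(A-E) : K) ≠ 0 := mul_ne_zero h2K hAE
  have hprod : ¬ (4*A*(A-E) = 0) := by
    intro h0
    rcases mul_eq_zero.mp h0 with h | h
    · rcases mul_eq_zero.mp h with h' | h'
      · norm_num at h'
      · exact hA h'
    · exact hAE h
  have hα₁0 : α₁ ≠ 0 := by
    rw [hα₁_def]
    intro h0
    rcases div_eq_zero_iff.mp h0 with h | h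
    · have hsB : s = B := by linear_combination h
      exact hprod (by linear_combination (-(s+B)) * hsB + hs₁)
    · exact hden₁ h
  have hα₂0 : α₂ ≠ 0 := by
    rw [hα₂_def]
    intro h0
    rcases div_eq_zero_iff.mp h0 with h | h
    · have hsB : s = B := by linear_combination h
      exact hprod (by linear_combination (-(s+B)) * hsB + hs₁)
    · exact hden₂ h
  have hαβ₁ : α₁ ≠ β₁ := by
    rw [hα₁_def, hβ₁_def]
    intro h0
    rw [div_eq_div_iff hden₁ hden₁] at h0
    have h4s : (4*A)*s = 0 := by linear_combination h0
    rcases mul_eq_zero.mp h4s with h | h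
    · rcases mul_eq_zero.mp h with h' | h'
      · norm_num at h'
      · exact hA h'
    · exact hs0 h
  have hαβ₂ : α₂ ≠ β₂ := by
    rw [hα₂_def, hβ₂_def]
    intro h0
    rw [div_eq_div_iff hden₂ hden₂] at h0
    have h4s : (4*(A-E))*s = 0 := by linear_combination h0
    rcases mul_eq_zero.mp h4s with h | h
    · rcases mul_eq_zero.mp h with h' | h'
      · norm_num at h'
      · exact hAE h'
    · exact hs0 h
  -- values of φ
  have v1 : φ (4/(N:ℚ)^2) = A := by
    rw [hφ, hA_def, Rat.coe_castHom]; push_cast; ring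
  have v2 : φ (1/(N:ℚ)^2) = B := by
    rw [hφ, hB_def, Rat.coe_castHom]; push_cast; ring
  have v3 : φ ((1:ℚ)/2^(2*ℓ)) = E := by
    rw [hφ, hE_def, Rat.coe_castHom]; push_cast; ring
  -- factorizations
  have hfac₁ : (C (4/(N:ℚ)^2) * X^(2*m) + C (1/(N:ℚ)^2) * X^m + C (4/(N:ℚ)^2)
        - C ((1:ℚ)/2^(2*ℓ))).map φ = C A * ((X^m - C α₁) * (X^m - C β₁)) := by
    have hmap : (C (4/(N:ℚ)^2) * X^(2*m) + C (1/(N:ℚ)^2) * X^m + C (4/(N:ℚ)^2)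
        - C ((1:ℚ)/2^(2*ℓ))).map φ = C A * X^(2*m) + C B * X^m + C (A-E) := by
      simp only [Polynomial.map_sub, Polynomial.map_add, Polynomial.map_mul,
        Polynomial.map_pow, map_C, map_X, v1, v2, v3, map_sub]
      ring
    rw [hmap, quadFactor h2K A B (A-E) s hA hs₁ m, hα₁_def, hβ₁_def]
  have hfac₂ : (C (4/(N:ℚ)^2) * X^(2*m) + C (1/(N:ℚ)^2) * X^m + C (4/(N:ℚ)^2)
        - C ((1:ℚ)/2^(2*ℓ)) * X^(2*m)).map φ = C (A-E) * ((X^m - C α₂) * (X^m - C β₂)) := by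
    have hmap : (C (4/(N:ℚ)^2) * X^(2*m) + C (1/(N:ℚ)^2) * X^m + C (4/(N:ℚ)^2)
        - C ((1:ℚ)/2^(2*ℓ)) * X^(2*m)).map φ = C (A-E) * X^(2*m) + C B * X^m + C A := by
      simp only [Polynomial.map_sub, Polynomial.map_add, Polynomial.map_mul,
        Polynomial.map_pow, map_C, map_X, v1, v2, v3, map_sub]
      ring
    rw [hmap, quadFactor h2K (A-E) B A s hAE hs₂ m, hα₂_def, hβ₂_def]
  refine ⟨?_, ?_, ?_, ?_⟩
  · rintro ⟨p₁, p₂, p₃, p₄, hp⟩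
    refine key_not_sum m hmodd A α₁ β₁ hA hα₁0 hαβ₁ (p₁.map φ) (p₂.map φ) (p₃.map φ)
      (p₄.map φ) ?_
    rw [← hfac₁, hp]
    simp [Polynomial.map_add, Polynomial.map_pow]
  · rintro ⟨p₁, p₂, p₃, p₄, hp⟩
    refine key_not_sum m hmodd (A-E) α₂ β₂ hAE hα₂0 hαβ₂ (p₁.map φ) (p₂.map φ) (p₃.map φ)
      (p₄.map φ) ?_
    rw [← hfac₂, hp]
    simp [Polynomial.map_add, Polynomial.map_pow]
  · rw [hfac₁]
    exact key_not_irred m hm0 A α₁ β₁ hA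
  · rw [hfac₂]
    exact key_not_irred m hm0 (A-E) α₂ β₂ hAE
end

section
/- Let a be a positive integer and let g ∈ ℤ[x] be a polynomial of odd degree d = 2k+1 with k ≥ 0. Then the polynomial f(x) = g(x)² + (8a − 1) satisfies f(t) > 0 for all t ∈ ℝ, but f is NOT a sum of four squares in ℚ[x]. -/
open Polynomial

variable {K : Type*} [Field K]






/-- Sum of squares of four polynomials, where not all are zero, is nonzero of
even degree twice the max degree, provided the 4-squares form is anisotropic. -/
lemma sos_ne_zero_natDegree (hK : ∀ x : Fin 4 → K, x 0 ^ 2 + x 1 ^ 2 + x 2 ^ 2 + x 3 ^ 2 = 0 → ∀ i, x i = 0) (p : Fin 4 → K[X]) (hne : ¬ ∀ i, p i = 0) :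
    (p 0 ^ 2 + p 1 ^ 2 + p 2 ^ 2 + p 3 ^ 2) ≠ 0 ∧
    (p 0 ^ 2 + p 1 ^ 2 + p 2 ^ 2 + p 3 ^ 2).natDegree
      = 2 * Finset.univ.sup (fun i => (p i).natDegree) := by
  push_neg at hne
  obtain ⟨j, hj⟩ := hne
  set D := Finset.univ.sup (fun i => (p i).natDegree) with hD
  have hdle : ∀ i, (p i).natDegree ≤ D := fun i =>
    Finset.le_sup (f := fun i => (p i).natDegree) (Finset.mem_univ i)
  -- the vector of coefficients in degree D
  set c : Fin 4 → K := fun i => (p i).coeff D with hc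
  have hcoeff : ∀ i : Fin 4, (p i ^ 2).coeff (2 * D) = c i ^ 2 := by
    intro i
    rw [sq (p i), two_mul, coeff_mul_add_eq_of_natDegree_le (hdle i) (hdle i), sq]
  have hScoeff : (p 0 ^ 2 + p 1 ^ 2 + p 2 ^ 2 + p 3 ^ 2).coeff (2 * D)
      = c 0 ^ 2 + c 1 ^ 2 + c 2 ^ 2 + c 3 ^ 2 := by
    simp [coeff_add, hcoeff]
  have hcnz : ¬ ∀ i, c i = 0 := by
    -- there exists an index with nonzero coefficient at D
    intro hall
    obtain ⟨i₀, -, hi₀⟩ := Finset.exists_mem_eq_sup Finset.univ ⟨j, Finset.mem_univ j⟩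
      (fun i => (p i).natDegree)
    by_cases h0 : p i₀ = 0
    · -- then D = 0 and every p i has natDegree ≤ 0
      have hD0 : D = 0 := by rw [hD, hi₀, h0, natDegree_zero]
      have hpj : p j = C ((p j).coeff 0) := (Polynomial.eq_C_of_natDegree_le_zero (by
        rw [← hD0]; exact hdle j))
      apply hj
      rw [hpj]
      have hcj := hall j
      rw [hc] at hcj
      simp only [hD0] at hcj
      rw [hcj, map_zero]
    · have hD' : D = (p i₀).natDegree := by rw [hD, hi₀]
      have hlc : (p i₀).coeff D ≠ 0 := by
        rw [hD']; exact leadingCoeff_ne_zero.mpr h0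
      exact hlc (hall i₀)
  have hsnz : c 0 ^ 2 + c 1 ^ 2 + c 2 ^ 2 + c 3 ^ 2 ≠ 0 := fun h => hcnz (hK c h)
  have hne0 : (p 0 ^ 2 + p 1 ^ 2 + p 2 ^ 2 + p 3 ^ 2).coeff (2 * D) ≠ 0 := by
    rw [hScoeff]; exact hsnz
  have hge : 2 * D ≤ (p 0 ^ 2 + p 1 ^ 2 + p 2 ^ 2 + p 3 ^ 2).natDegree :=
    le_natDegree_of_ne_zero hne0
  have hle : (p 0 ^ 2 + p 1 ^ 2 + p 2 ^ 2 + p 3 ^ 2).natDegree ≤ 2 * D := by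
    have h1 : ∀ i : Fin 4, (p i ^ 2).natDegree ≤ 2 * D := by
      intro i
      calc (p i ^ 2).natDegree ≤ 2 * (p i).natDegree := natDegree_pow_le
        _ ≤ 2 * D := Nat.mul_le_mul_left 2 (hdle i)
    refine le_trans (natDegree_add_le _ _) (max_le (le_trans (natDegree_add_le _ _)
      (max_le (le_trans (natDegree_add_le _ _) (max_le (h1 0) (h1 1))) (h1 2))) (h1 3))
  exact ⟨fun h => hne0 (by rw [h, coeff_zero]), le_antisymm hle hge⟩


/-- Any nonzero polynomial of odd degree has a monic irreducible factor of odd degree. -/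
lemma exists_odd_deg_factor :
    ∀ N : ℕ, ∀ P : K[X], P.natDegree ≤ N → P ≠ 0 → Odd P.natDegree →
      ∃ q : K[X], q.Monic ∧ Irreducible q ∧ Odd q.natDegree ∧ q ∣ P := by
  intro N
  induction N with
  | zero =>
    intro P hle h0 hodd
    rcases hodd with ⟨m, hm⟩; omega
  | succ N IH =>
    intro P hle h0 hodd
    have h1 : 1 ≤ P.natDegree := by
      rcases hodd with ⟨m, hm⟩; omega
    obtain ⟨q, hqm, hqi, hqd⟩ := P.exists_monic_irreducible_factor
      (not_isUnit_of_natDegree_pos P h1)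
    by_cases hodd' : Odd q.natDegree
    · exact ⟨q, hqm, hqi, hodd', hqd⟩
    · obtain ⟨P', hP'⟩ := hqd
      have hq0 : q ≠ 0 := hqm.ne_zero
      have hP'0 : P' ≠ 0 := fun h => h0 (by rw [hP', h, mul_zero])
      have hdeg : P.natDegree = q.natDegree + P'.natDegree := by
        rw [hP', natDegree_mul hq0 hP'0]
      have hq2 : 2 ≤ q.natDegree := by
        have := hqi.natDegree_pos
        rcases Nat.even_or_odd q.natDegree with he | ho
        · rcases he with ⟨m, hm⟩; omega
        · exact absurd ho hodd'
      obtain ⟨q', hq'm, hq'i, hq'odd, hq'dvd⟩ := IH P' (by omega) hP'0 (by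
        rcases hodd with ⟨m, hm⟩
        rcases (Nat.even_or_odd P'.natDegree) with he | ho
        · exfalso
          rcases he with ⟨l, hl⟩
          have : Even q.natDegree := Nat.not_odd_iff_even.mp hodd'
          rcases this with ⟨u, hu⟩
          omega
        · exact ho)
      exact ⟨q', hq'm, hq'i, hq'odd, hq'dvd.trans ⟨q, by rw [hP']; ring⟩⟩

/-- Existence of the exact exponent of an irreducible factor. -/
lemma exists_exact_exponent {q P : K[X]} (hq : Irreducible q) (hP : P ≠ 0) :
    ∃ m : ℕ, q ^ m ∣ P ∧ ¬ q ^ (m + 1) ∣ P := by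
  by_contra hcon
  push_neg at hcon
  have hall : ∀ m : ℕ, q ^ m ∣ P := by
    intro m
    induction m with
    | zero => simp
    | succ m IH => exact hcon m IH
  have hbound := hall (P.natDegree + 1)
  have hq1 : 1 ≤ q.natDegree := hq.natDegree_pos
  have hqn0 : q ≠ 0 := hq.ne_zero
  have h1 : (q ^ (P.natDegree + 1)).natDegree ≤ P.natDegree := natDegree_le_of_dvd hbound hP
  rw [natDegree_pow] at h1
  nlinarith

/-- A nonzero polynomial of odd degree has a monic irreducible factor of odd degree
occurring with odd multiplicity. -/
lemma exists_odd_mult_factor :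
    ∀ N : ℕ, ∀ P : K[X], P.natDegree ≤ N → P ≠ 0 → Odd P.natDegree →
      ∃ (q : K[X]) (m : ℕ), q.Monic ∧ Irreducible q ∧ Odd q.natDegree ∧ Odd m ∧
        q ^ m ∣ P ∧ ¬ q ^ (m + 1) ∣ P := by
  intro N
  induction N with
  | zero =>
    intro P hle h0 hodd
    rcases hodd with ⟨m, hm⟩; omega
  | succ N IH =>
    intro P hle h0 hodd
    obtain ⟨q, hqm, hqi, hqodd, hqdvd⟩ := exists_odd_deg_factor P.natDegree P le_rfl h0 hodd
    obtain ⟨m, hmd, hmnd⟩ := exists_exact_exponent hqi h0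
    have hm1 : 1 ≤ m := by
      rcases Nat.eq_zero_or_pos m with h | h
      · exfalso; apply hmnd; rw [h]; simpa using hqdvd
      · exact h
    by_cases hmodd : Odd m
    · exact ⟨q, m, hqm, hqi, hqodd, hmodd, hmd, hmnd⟩
    · -- m is even, write P = q^m * P'
      obtain ⟨P', hP'⟩ := hmd
      have hq0 : q ≠ 0 := hqm.ne_zero
      have hP'0 : P' ≠ 0 := fun h => h0 (by rw [hP', h, mul_zero])
      have hqP' : ¬ q ∣ P' := by
        intro ⟨c, hc⟩
        exact hmnd ⟨c, by rw [hP', hc]; ring⟩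
      have hdeg : P.natDegree = m * q.natDegree + P'.natDegree := by
        rw [hP', natDegree_mul (pow_ne_zero m hq0) hP'0, natDegree_pow]
      have hmeven : Even m := Nat.not_odd_iff_even.mp hmodd
      have hP'odd : Odd P'.natDegree := by
        rcases hmeven.mul_right q.natDegree with ⟨u, hu⟩
        rcases hodd with ⟨v, hv⟩
        rcases Nat.even_or_odd P'.natDegree with ⟨l, hl⟩ | ho
        · exfalso; omega
        · exact ho
      have hP'lt : P'.natDegree < P.natDegree := by
        have : 1 ≤ q.natDegree := hqi.natDegree_pos
        nlinarith
      obtain ⟨q', m', hq'm, hq'i, hq'odd, hm'odd, hm'd, hm'nd⟩ :=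
        IH P' (by omega) hP'0 hP'odd
      refine ⟨q', m', hq'm, hq'i, hq'odd, hm'odd, ?_, ?_⟩
      · exact hm'd.trans ⟨q ^ m, by rw [hP']; ring⟩
      · intro hdvd
        -- q' ≠ q since q ∤ P' but q'^m' ∣ P' with m' ≥ 1
        have hm'1 : 1 ≤ m' := by
          rcases hm'odd with ⟨u, hu⟩; omega
        have hne : q' ≠ q := by
          intro h
          apply hqP'
          have : q' ∣ P' := (dvd_pow_self q' (by omega : m' ≠ 0)).trans hm'd
          rwa [h] at this
        have hq'prime : Prime q' := hq'i.prime
        have hq'nq : ¬ q' ∣ q ^ m := by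
          intro h
          have : q' ∣ q := hq'prime.dvd_of_dvd_pow h
          exact hne (eq_of_monic_of_associated hq'm hqm (hq'i.associated_of_dvd hqi this))
        rw [hP'] at hdvd
        exact hm'nd (hq'prime.pow_dvd_of_dvd_mul_left _ hq'nq hdvd)

set_option maxHeartbeats 1000000 in
/-- Specialized Springer theorem: if the 4-squares form is anisotropic over `K` and `h` is an
irreducible polynomial of odd degree, then `h` dividing a sum of four squares of polynomials of
strictly smaller degree forces them all to vanish. -/
lemma springer_key (hK : ∀ x : Fin 4 → K, x 0 ^ 2 + x 1 ^ 2 + x 2 ^ 2 + x 3 ^ 2 = 0 → ∀ i, x i = 0) :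
    ∀ n : ℕ, ∀ N : ℕ, ∀ h : K[X], Irreducible h → h.natDegree = n → Odd n →
    ∀ p : Fin 4 → K[X],
      ((p 0).natDegree + (p 1).natDegree + (p 2).natDegree + (p 3).natDegree) ≤ N →
      (∀ i, (p i).natDegree < n) →
      (h ∣ p 0 ^ 2 + p 1 ^ 2 + p 2 ^ 2 + p 3 ^ 2) → ∀ i, p i = 0 := by
  intro n
  induction n using Nat.strong_induction_on with
  | _ n IHn =>
  intro N
  induction N using Nat.strong_induction_on with
  | _ N IHN =>
  intro h hirr hdeg hodd p hN hlt hdvd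
  by_cases hall : ∀ i, p i = 0
  · exact hall
  push_neg at hall
  obtain ⟨j, hj⟩ := hall
  by_cases hcom : ∃ t : K[X], t.Monic ∧ Irreducible t ∧ ∀ i, t ∣ p i
  · -- strip a common irreducible factor
    obtain ⟨t, htm, hti, htd⟩ := hcom
    set p' : Fin 4 → K[X] := fun i => p i /ₘ t with hp'
    have heq : ∀ i, p i = t * p' i := by
      intro i
      conv_lhs => rw [← modByMonic_add_div (p i) t]
      rw [(modByMonic_eq_zero_iff_dvd htm).mpr (htd i), zero_add, hp']
    have htdeg : 1 ≤ t.natDegree := hti.natDegree_pos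
    have ht0 : t ≠ 0 := htm.ne_zero
    have hd' : ∀ i, (p' i).natDegree ≤ (p i).natDegree := by
      intro i
      rw [hp', natDegree_divByMonic _ htm]
      omega
    have hdj : (p' j).natDegree < (p j).natDegree := by
      have h1 : t.natDegree ≤ (p j).natDegree := natDegree_le_of_dvd (htd j) hj
      rw [hp', natDegree_divByMonic _ htm]
      omega
    have hnd : h ∣ p' 0 ^ 2 + p' 1 ^ 2 + p' 2 ^ 2 + p' 3 ^ 2 := by
      have hS : p 0 ^ 2 + p 1 ^ 2 + p 2 ^ 2 + p 3 ^ 2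
          = t * (t * (p' 0 ^ 2 + p' 1 ^ 2 + p' 2 ^ 2 + p' 3 ^ 2)) := by
        rw [heq 0, heq 1, heq 2, heq 3]; ring
      rw [hS] at hdvd
      have hht : ¬ h ∣ t := by
        intro hd
        have := natDegree_le_of_dvd hd ht0
        have h2 := natDegree_le_of_dvd (htd j) hj
        have := hlt j
        omega
      rcases hirr.prime.dvd_mul.mp hdvd with h1 | h1
      · exact absurd h1 hht
      rcases hirr.prime.dvd_mul.mp h1 with h2 | h2
      · exact absurd h2 hht
      · exact h2
    have hres := IHN ((p' 0).natDegree + (p' 1).natDegree + (p' 2).natDegree + (p' 3).natDegree)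
      (by
        have hsum4 : ∀ r : Fin 4 → K[X], (r 0).natDegree + (r 1).natDegree + (r 2).natDegree
            + (r 3).natDegree = ∑ i, (r i).natDegree := by
          intro r; rw [Fin.sum_univ_four]
        calc (p' 0).natDegree + (p' 1).natDegree + (p' 2).natDegree + (p' 3).natDegree
            = ∑ i, (p' i).natDegree := hsum4 p'
          _ < ∑ i, (p i).natDegree := Finset.sum_lt_sum (fun i _ => hd' i) ⟨j, Finset.mem_univ j, hdj⟩
          _ = (p 0).natDegree + (p 1).natDegree + (p 2).natDegree + (p 3).natDegree := (hsum4 p).symm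
          _ ≤ N := hN)
      h hirr hdeg hodd p' le_rfl (fun i => lt_of_le_of_lt (hd' i) (hlt i) |>.trans_le le_rfl) hnd
    intro i
    rw [heq i, hres i, mul_zero]
  · -- main Springer descent
    obtain ⟨hS0, hSdeg⟩ := sos_ne_zero_natDegree hK p (by push_neg; exact ⟨j, hj⟩)
    obtain ⟨r, hr⟩ := hdvd
    have hr0 : r ≠ 0 := by
      intro h0; rw [h0, mul_zero] at hr; exact hS0 hr
    have hdegr : 2 * Finset.univ.sup (fun i => (p i).natDegree) = n + r.natDegree := by
      rw [← hSdeg, hr, natDegree_mul hirr.ne_zero hr0, hdeg]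
    have hDle : Finset.univ.sup (fun i => (p i).natDegree) ≤ n - 1 :=
      Finset.sup_le (fun i _ => by have := hlt i; omega)
    have hrodd : Odd r.natDegree := by
      rcases hodd with ⟨v, hv⟩
      rcases Nat.even_or_odd r.natDegree with ⟨l, hl⟩ | ho
      · omega
      · exact ho
    obtain ⟨q, hqm, hqi, hqodd, hqdvd⟩ := exists_odd_deg_factor r.natDegree r le_rfl hr0 hrodd
    have hq1 : 1 ≤ q.natDegree := hqi.natDegree_pos
    have hqn : q.natDegree < n := by
      have h1 : q.natDegree ≤ r.natDegree := natDegree_le_of_dvd hqdvd hr0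
      have h2 : 1 ≤ n := by rcases hodd with ⟨v, hv⟩; omega
      omega
    set p'' : Fin 4 → K[X] := fun i => p i %ₘ q with hp''
    have hmod : ∀ i, p i - p'' i = q * (p i /ₘ q) := by
      intro i
      conv_lhs => rw [← modByMonic_add_div (p i) q]
      rw [hp'']; ring
    have hq_dvd_diff : ∀ i : Fin 4, q ∣ (p i ^ 2 - p'' i ^ 2) := by
      intro i
      refine ⟨(p i /ₘ q) * (p i + p'' i), ?_⟩
      have h1 : p i ^ 2 - p'' i ^ 2 = (p i - p'' i) * (p i + p'' i) := by ring
      rw [h1, hmod i]; ring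
    have hqS : q ∣ p 0 ^ 2 + p 1 ^ 2 + p 2 ^ 2 + p 3 ^ 2 := by
      rw [hr]; exact (hqdvd.mul_left h)
    have hqS'' : q ∣ p'' 0 ^ 2 + p'' 1 ^ 2 + p'' 2 ^ 2 + p'' 3 ^ 2 := by
      have heq2 : p'' 0 ^ 2 + p'' 1 ^ 2 + p'' 2 ^ 2 + p'' 3 ^ 2
          = (p 0 ^ 2 + p 1 ^ 2 + p 2 ^ 2 + p 3 ^ 2)
            - ((p 0 ^ 2 - p'' 0 ^ 2) + (p 1 ^ 2 - p'' 1 ^ 2)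
              + (p 2 ^ 2 - p'' 2 ^ 2) + (p 3 ^ 2 - p'' 3 ^ 2)) := by ring
      rw [heq2]
      exact dvd_sub hqS (dvd_add (dvd_add (dvd_add (hq_dvd_diff 0) (hq_dvd_diff 1))
        (hq_dvd_diff 2)) (hq_dvd_diff 3))
    have hq_ne_one : q ≠ 1 := by
      intro h1; rw [h1, natDegree_one] at hq1; omega
    have hlt'' : ∀ i, (p'' i).natDegree < q.natDegree := by
      intro i; rw [hp'']; exact natDegree_modByMonic_lt (p i) hqm hq_ne_one
    have hres := IHn q.natDegree hqn
      ((p'' 0).natDegree + (p'' 1).natDegree + (p'' 2).natDegree + (p'' 3).natDegree)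
      q hqi rfl hqodd p'' le_rfl hlt'' hqS''
    exfalso
    apply hcom
    refine ⟨q, hqm, hqi, fun i => ?_⟩
    rw [← modByMonic_eq_zero_iff_dvd hqm]
    exact hres i

/-- Over a field where the four-squares form is anisotropic, `2 ≠ 0`, and `-c` is a nonzero
square, `G ^ 2 + C c` is not a sum of four squares of polynomials when `G` has odd degree. -/
theorem key_no_four_squares
    (hK : ∀ x : Fin 4 → K, x 0 ^ 2 + x 1 ^ 2 + x 2 ^ 2 + x 3 ^ 2 = 0 → ∀ i, x i = 0)
    (h2 : (2 : K) ≠ 0) (c s : K) (hs : s ^ 2 = -c) (hs0 : s ≠ 0)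
    (G : K[X]) (hGodd : Odd G.natDegree)
    (p : Fin 4 → K[X])
    (hsum : G ^ 2 + C c = p 0 ^ 2 + p 1 ^ 2 + p 2 ^ 2 + p 3 ^ 2) : False := by
  have hG1 : 1 ≤ G.natDegree := by rcases hGodd with ⟨v, hv⟩; omega
  set A : K[X] := G - C s with hA
  set B : K[X] := G + C s with hB
  have hAB : A * B = G ^ 2 + C c := by
    rw [hA, hB]
    have h1 : (G - C s) * (G + C s) = G ^ 2 - C s ^ 2 := by ring
    rw [h1, ← C_pow, hs, map_neg, sub_neg_eq_add]
  have hAdeg : A.natDegree = G.natDegree := natDegree_sub_C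
  have hBdeg : B.natDegree = G.natDegree := natDegree_add_C
  have hA0 : A ≠ 0 := fun h => by rw [h, natDegree_zero] at hAdeg; omega
  have hB0 : B ≠ 0 := fun h => by rw [h, natDegree_zero] at hBdeg; omega
  obtain ⟨q, m, hqm, hqi, hqodd, hmodd, hmd, hmnd⟩ :=
    exists_odd_mult_factor A.natDegree A le_rfl hA0 (by rw [hAdeg]; exact hGodd)
  have hq0 : q ≠ 0 := hqm.ne_zero
  have hq1 : 1 ≤ q.natDegree := hqi.natDegree_pos
  have hm1 : 1 ≤ m := by rcases hmodd with ⟨v, hv⟩; omega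
  have hqA : q ∣ A := (dvd_pow_self q (by omega : m ≠ 0)).trans hmd
  have hqB : ¬ q ∣ B := by
    intro hd
    have hdiff : B - A = C (2 * s) := by
      rw [hA, hB, two_mul, map_add]; ring
    have hqd : q ∣ C (2 * s) := hdiff ▸ dvd_sub hd hqA
    have h2s : (2 : K) * s ≠ 0 := mul_ne_zero h2 hs0
    have : IsUnit q := isUnit_of_dvd_unit hqd (isUnit_C.mpr h2s.isUnit)
    exact hqi.not_isUnit this
  -- exact exponent of q in F := A * B is m
  have hqprime : Prime q := hqi.prime
  have hFm : q ^ m ∣ A * B := (hmd.mul_right B)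
  have hFmn : ¬ q ^ (m + 1) ∣ A * B := by
    intro hd
    exact hmnd (hqprime.pow_dvd_of_dvd_mul_right _ hqB hd)
  have hF0 : A * B ≠ 0 := mul_ne_zero hA0 hB0
  -- p i are not all zero
  have hpne : ¬ ∀ i, p i = 0 := by
    intro hall
    apply hF0
    rw [hAB, hsum, hall 0, hall 1, hall 2, hall 3]; ring
  push_neg at hpne
  obtain ⟨j, hj⟩ := hpne
  -- largest power of q dividing all p i
  have hex : ∃ t : ℕ, (∀ i, q ^ t ∣ p i) ∧ ¬ (∀ i, q ^ (t + 1) ∣ p i) := by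
    by_contra hcon
    push_neg at hcon
    have hall : ∀ t : ℕ, ∀ i, q ^ t ∣ p i := by
      intro t
      induction t with
      | zero => intro i; simp
      | succ t IH => exact hcon t IH
    have hd := hall ((p j).natDegree + 1) j
    have h1 := natDegree_le_of_dvd hd hj
    rw [natDegree_pow] at h1
    nlinarith
  obtain ⟨t, htall, htn⟩ := hex
  set R : Fin 4 → K[X] := fun i => p i /ₘ q ^ t with hR
  have hqtm : (q ^ t).Monic := hqm.pow t
  have heqR : ∀ i, p i = q ^ t * R i := by
    intro i
    conv_lhs => rw [← modByMonic_add_div (p i) (q ^ t)]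
    rw [(modByMonic_eq_zero_iff_dvd hqtm).mpr (htall i), zero_add, hR]
  have hFR : A * B = q ^ (2 * t) * (R 0 ^ 2 + R 1 ^ 2 + R 2 ^ 2 + R 3 ^ 2) := by
    rw [hAB, hsum, heqR 0, heqR 1, heqR 2, heqR 3]
    ring
  -- q does not divide the sum of squares of the R i
  have hqR : ¬ q ∣ R 0 ^ 2 + R 1 ^ 2 + R 2 ^ 2 + R 3 ^ 2 := by
    intro hqd
    set R' : Fin 4 → K[X] := fun i => R i %ₘ q with hR'
    have hmod : ∀ i, R i - R' i = q * (R i /ₘ q) := by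
      intro i
      conv_lhs => rw [← modByMonic_add_div (R i) q]
      rw [hR']; ring
    have hq_dvd_diff : ∀ i : Fin 4, q ∣ (R i ^ 2 - R' i ^ 2) := by
      intro i
      refine ⟨(R i /ₘ q) * (R i + R' i), ?_⟩
      have h1 : R i ^ 2 - R' i ^ 2 = (R i - R' i) * (R i + R' i) := by ring
      rw [h1, hmod i]; ring
    have hqS' : q ∣ R' 0 ^ 2 + R' 1 ^ 2 + R' 2 ^ 2 + R' 3 ^ 2 := by
      have heq2 : R' 0 ^ 2 + R' 1 ^ 2 + R' 2 ^ 2 + R' 3 ^ 2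
          = (R 0 ^ 2 + R 1 ^ 2 + R 2 ^ 2 + R 3 ^ 2)
            - ((R 0 ^ 2 - R' 0 ^ 2) + (R 1 ^ 2 - R' 1 ^ 2)
              + (R 2 ^ 2 - R' 2 ^ 2) + (R 3 ^ 2 - R' 3 ^ 2)) := by ring
      rw [heq2]
      exact dvd_sub hqd (dvd_add (dvd_add (dvd_add (hq_dvd_diff 0) (hq_dvd_diff 1))
        (hq_dvd_diff 2)) (hq_dvd_diff 3))
    have hq_ne_one : q ≠ 1 := by
      intro h1; rw [h1, natDegree_one] at hq1; omega
    have hlt' : ∀ i, (R' i).natDegree < q.natDegree := by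
      intro i; rw [hR']; exact natDegree_modByMonic_lt (R i) hqm hq_ne_one
    have hres := springer_key hK q.natDegree
      ((R' 0).natDegree + (R' 1).natDegree + (R' 2).natDegree + (R' 3).natDegree)
      q hqi rfl hqodd R' le_rfl hlt' hqS'
    apply htn
    intro i
    have hRi : q ∣ R i := by
      rw [← modByMonic_eq_zero_iff_dvd hqm]
      exact hres i
    rw [heqR i]
    obtain ⟨u, hu⟩ := hRi
    exact ⟨u, by rw [hu, pow_succ]; ring⟩
  -- the exact exponent of q in A * B is 2 * t, contradiction with m odd
  have hq2t : q ^ (2 * t) ∣ A * B := ⟨_, hFR⟩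
  have hq2tn : ¬ q ^ (2 * t + 1) ∣ A * B := by
    intro hd
    rw [hFR, pow_succ] at hd
    have := (mul_dvd_mul_iff_left (pow_ne_zero (2 * t) hq0)).mp hd
    exact hqR this
  have hmeq : m = 2 * t := by
    rcases lt_trichotomy m (2 * t) with hlt' | heq' | hgt'
    · exact absurd (dvd_trans (pow_dvd_pow q (by omega : m + 1 ≤ 2 * t)) hq2t) hFmn
    · exact heq'
    · exact absurd (dvd_trans (pow_dvd_pow q (by omega : 2 * t + 1 ≤ m)) hFm) hq2tn
  rcases hmodd with ⟨v, hv⟩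
  omega

set_option maxRecDepth 40000 in
lemma zmod8_aux_s2 : ∀ a b c d : ZMod (2 ^ 3), a ^ 2 + b ^ 2 + c ^ 2 + d ^ 2 = 0 → a ≠ 1 := by
  decide

/-- The four-squares quadratic form is anisotropic over `ℚ₂`. -/
lemma aniso4_padic :
    ∀ x : Fin 4 → ℚ_[2], x 0 ^ 2 + x 1 ^ 2 + x 2 ^ 2 + x 3 ^ 2 = 0 → ∀ i, x i = 0 := by
  intro x hsum i
  by_contra hx
  obtain ⟨i₀, -, hmax⟩ := Finset.exists_max_image Finset.univ (fun l => ‖x l‖)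
    ⟨i, Finset.mem_univ i⟩
  have hpos : 0 < ‖x i₀‖ := lt_of_lt_of_le (norm_pos_iff.mpr hx) (hmax i (Finset.mem_univ i))
  have hi₀ : x i₀ ≠ 0 := norm_pos_iff.mp hpos
  have hylen : ∀ l, ‖x l / x i₀‖ ≤ 1 := by
    intro l
    rw [norm_div, div_le_one hpos]
    exact hmax l (Finset.mem_univ l)
  set z : Fin 4 → ℤ_[2] := fun l => ⟨x l / x i₀, hylen l⟩ with hz
  have hzsum : z 0 ^ 2 + z 1 ^ 2 + z 2 ^ 2 + z 3 ^ 2 = 0 := by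
    have : ((z 0 ^ 2 + z 1 ^ 2 + z 2 ^ 2 + z 3 ^ 2 : ℤ_[2]) : ℚ_[2]) = 0 := by
      push_cast
      show (x 0 / x i₀) ^ 2 + (x 1 / x i₀) ^ 2 + (x 2 / x i₀) ^ 2 + (x 3 / x i₀) ^ 2 = 0
      field_simp
      linear_combination hsum
    exact Subtype.ext (this.trans (show (0:ℚ_[2]) = ((0:ℤ_[2]):ℚ_[2]) by norm_num))
  have hzi₀ : z i₀ = 1 := by
    apply Subtype.ext
    show x i₀ / x i₀ = ((1 : ℤ_[2]) : ℚ_[2])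
    rw [div_self hi₀]; norm_cast
  set w : Fin 4 → ZMod (2 ^ 3) := fun l => PadicInt.toZModPow 3 (z l) with hw
  have hwsum : w 0 ^ 2 + w 1 ^ 2 + w 2 ^ 2 + w 3 ^ 2 = 0 := by
    rw [hw]
    simp only []
    rw [← map_pow, ← map_pow, ← map_pow, ← map_pow, ← map_add, ← map_add, ← map_add, hzsum,
      map_zero]
  have hwi₀ : w i₀ = 1 := by rw [hw]; simp only []; rw [hzi₀, map_one]
  fin_cases i₀
  · exact zmod8_aux_s2 (w 0) (w 1) (w 2) (w 3) (by linear_combination hwsum) hwi₀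
  · exact zmod8_aux_s2 (w 1) (w 0) (w 2) (w 3) (by linear_combination hwsum) hwi₀
  · exact zmod8_aux_s2 (w 2) (w 0) (w 1) (w 3) (by linear_combination hwsum) hwi₀
  · exact zmod8_aux_s2 (w 3) (w 0) (w 1) (w 2) (by linear_combination hwsum) hwi₀

/-- `1 - 8a` is a square in `ℚ₂`. -/
lemma exists_sqrt_padic (a : ℕ) : ∃ s : ℚ_[2], s ^ 2 = 1 - 8 * (a : ℚ_[2]) := by
  set F : Polynomial ℤ_[2] := X ^ 2 - C (1 - 8 * (a : ℤ_[2])) with hF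
  have heval : F.eval 1 = 8 * (a : ℤ_[2]) := by
    simp [hF]
  have hderiv : F.derivative.eval 1 = 2 := by
    simp [hF]; norm_num
  have hnorm : ‖F.eval 1‖ < ‖F.derivative.eval 1‖ ^ 2 := by
    rw [heval, hderiv]
    have h2 : ‖(2 : ℤ_[2])‖ = (1 : ℝ) / 2 := by
      have := PadicInt.norm_p (p := 2)
      simpa using this
    have h8 : ‖(8 : ℤ_[2])‖ = (1 : ℝ) / 8 := by
      have h88 : (8 : ℤ_[2]) = 2 * (2 * 2) := by norm_num
      rw [h88, norm_mul, norm_mul, h2]; norm_num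
    have ha : ‖(a : ℤ_[2])‖ ≤ 1 := PadicInt.norm_le_one _
    have : ‖8 * (a : ℤ_[2])‖ ≤ 1 / 8 := by
      rw [norm_mul, h8]
      nlinarith [norm_nonneg ((a : ℤ_[2]))]
    rw [h2]
    nlinarith
  obtain ⟨z, hz, -⟩ := hensels_lemma hnorm
  refine ⟨(z : ℚ_[2]), ?_⟩
  have : (z : ℤ_[2]) ^ 2 - (1 - 8 * (a : ℤ_[2])) = 0 := by
    have := hz
    simp [hF] at this
    linear_combination this
  have hq : ((z ^ 2 - (1 - 8 * (a : ℤ_[2])) : ℤ_[2]) : ℚ_[2]) = 0 := by rw [this]; norm_num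
  push_cast at hq
  have h8q : ((8 : ℤ_[2]) : ℚ_[2]) = 8 := by
    rw [show (8 : ℤ_[2]) = ((8:ℕ) : ℤ_[2]) by norm_num]
    rw [PadicInt.coe_natCast]
    norm_num
  rw [h8q] at hq
  linear_combination hq

theorem square_plus_8a_sub_one_positive_but_not_sum_of_four_squares
    (a : ℕ) (ha : 0 < a) (k : ℕ) (g : Polynomial ℤ)
    (hg : g.natDegree = 2 * k + 1)
    (f : Polynomial ℚ)
    (hf : f = (g.map (Int.castRingHom ℚ)) ^ 2 + C ((8 * a - 1 : ℤ) : ℚ)) :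
    (∀ t : ℝ, 0 < Polynomial.aeval t f) ∧
    ¬ ∃ p₁ p₂ p₃ p₄ : Polynomial ℚ, f = p₁ ^ 2 + p₂ ^ 2 + p₃ ^ 2 + p₄ ^ 2 := by
  constructor
  · -- positivity
    intro t
    rw [hf]
    simp only [map_add, map_pow]
    rw [aeval_C]
    have hc : ((7 : ℝ)) ≤ algebraMap ℚ ℝ ((8 * a - 1 : ℤ) : ℚ) := by
      rw [show (algebraMap ℚ ℝ) ((8 * a - 1 : ℤ) : ℚ) = (((8 * a - 1 : ℤ) : ℚ) : ℝ) from rfl]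
      push_cast
      have : (1 : ℝ) ≤ (a : ℝ) := by exact_mod_cast Nat.one_le_cast.mpr ha
      nlinarith
    nlinarith [sq_nonneg ((aeval t) (g.map (Int.castRingHom ℚ)))]
  · -- not a sum of four squares
    rintro ⟨p₁, p₂, p₃, p₄, hp⟩
    -- move to ℚ₂
    set φ : ℚ →+* ℚ_[2] := Rat.castHom ℚ_[2] with hφ
    set G : (ℚ_[2])[X] := g.map (Int.castRingHom ℚ_[2]) with hG
    have hGdeg : G.natDegree = 2 * k + 1 := by
      rw [hG, natDegree_map_eq_of_injective Int.cast_injective, hg]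
    obtain ⟨s, hs⟩ := exists_sqrt_padic a
    have hcast : ((8 * (a : ℤ) - 1 : ℤ) : ℚ_[2]) = 8 * (a : ℚ_[2]) - 1 := by push_cast; ring
    have hs' : s ^ 2 = -(((8 * (a : ℤ) - 1 : ℤ) : ℚ_[2])) := by
      rw [hcast, hs]; ring
    have hs0 : s ≠ 0 := by
      intro h0
      rw [h0] at hs
      have h1 : (8 : ℚ_[2]) * (a : ℚ_[2]) = 1 := by linear_combination hs
      have h2 : ((8 * (a : ℤ) : ℤ) : ℚ_[2]) = ((1 : ℤ) : ℚ_[2]) := by push_cast; linear_combination h1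
      have h3 : (8 * (a : ℤ) : ℤ) = 1 := Int.cast_injective h2
      omega
    -- map the four-squares identity
    have hmapf : f.map φ = G ^ 2 + C ((8 * (a : ℤ) - 1 : ℤ) : ℚ_[2]) := by
      rw [hf]
      rw [Polynomial.map_add, Polynomial.map_pow, Polynomial.map_C, map_map,
        Subsingleton.elim (φ.comp (Int.castRingHom ℚ)) (Int.castRingHom ℚ_[2]), map_intCast]
    have hmapp : f.map φ = (p₁.map φ) ^ 2 + (p₂.map φ) ^ 2 + (p₃.map φ) ^ 2 + (p₄.map φ) ^ 2 := by
      rw [hp]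
      simp only [Polynomial.map_add, Polynomial.map_pow]
    refine key_no_four_squares aniso4_padic (by norm_num)
      ((8 * (a : ℤ) - 1 : ℤ) : ℚ_[2]) s hs' hs0 G (by rw [hGdeg]; exact ⟨k, by ring⟩)
      ![p₁.map φ, p₂.map φ, p₃.map φ, p₄.map φ] ?_
    show G ^ 2 + C ((8 * (a : ℤ) - 1 : ℤ) : ℚ_[2])
        = (p₁.map φ) ^ 2 + (p₂.map φ) ^ 2 + (p₃.map φ) ^ 2 + (p₄.map φ) ^ 2
    rw [← hmapf, hmapp]
end

section
/- Let a be a positive integer, let g ∈ ℤ[x] be a polynomial of odd degree d = 2k+1 with k ≥ 0, and set f(x) = g(x)² + (8a − 1). Then for every integer ℓ ≥ 2, the polynomial f(x) − 2^{−2ℓ} is NOT a sum of four squares in ℚ[x]. -/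
open Polynomial


private lemma zmod8_aux_s3 : ∀ X Y Z : ZMod (2^3), 1 + X^2 + Y^2 + Z^2 ≠ 0 := by decide

private lemma padicInt_aux (x y z : ℤ_[2]) : 1 + x^2 + y^2 + z^2 ≠ 0 := by
  intro h
  have h2 := congrArg (PadicInt.toZModPow 3) h
  rw [map_add, map_add, map_add, map_pow, map_pow, map_pow, map_one, map_zero] at h2
  exact zmod8_aux_s3 _ _ _ h2

private lemma padic_key (a b c d : ℚ_[2]) (h : a^2+b^2+c^2+d^2 = 0)
    (hb : ‖b‖ ≤ ‖a‖) (hc : ‖c‖ ≤ ‖a‖) (hd : ‖d‖ ≤ ‖a‖) : a = 0 := by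
  by_contra ha
  have hna : 0 < ‖a‖ := norm_pos_iff.mpr ha
  set x : ℤ_[2] := ⟨b/a, by rw [norm_div]; exact div_le_one_of_le₀ hb (norm_nonneg a)⟩
  set y : ℤ_[2] := ⟨c/a, by rw [norm_div]; exact div_le_one_of_le₀ hc (norm_nonneg a)⟩
  set z : ℤ_[2] := ⟨d/a, by rw [norm_div]; exact div_le_one_of_le₀ hd (norm_nonneg a)⟩
  apply padicInt_aux x y z
  have : ((1 + x^2 + y^2 + z^2 : ℤ_[2]) : ℚ_[2]) = 0 := by
    push_cast
    show 1 + (b/a)^2 + (c/a)^2 + (d/a)^2 = 0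
    field_simp
    linear_combination h
  exact PadicInt.coe_eq_zero.mp this

private lemma padic_aniso (a b c d : ℚ_[2]) (h : a^2+b^2+c^2+d^2 = 0) :
    a = 0 ∧ b = 0 ∧ c = 0 ∧ d = 0 := by
  have key : ∀ w x y z : ℚ_[2], w^2+x^2+y^2+z^2 = 0 → ‖x‖ ≤ ‖w‖ → ‖y‖ ≤ ‖w‖ → ‖z‖ ≤ ‖w‖ →
      w = 0 ∧ x = 0 ∧ y = 0 ∧ z = 0 := by
    intro w x y z h0 hx hy hz
    have hw := padic_key w x y z h0 hx hy hz
    rw [hw, norm_zero] at hx hy hz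
    refine ⟨hw, ?_, ?_, ?_⟩ <;>
      [exact norm_le_zero_iff.mp hx; exact norm_le_zero_iff.mp hy; exact norm_le_zero_iff.mp hz]
  rcases le_total ‖a‖ ‖b‖ with h1 | h1 <;> rcases le_total ‖c‖ ‖d‖ with h2 | h2
  · rcases le_total ‖b‖ ‖d‖ with h3 | h3
    · obtain ⟨h4,h5,h6,h7⟩ := key d a b c (by linear_combination h) ((h1.trans h3).trans le_rfl)
        (h3) (h2)
      exact ⟨h5,h6,h7,h4⟩
    · obtain ⟨h4,h5,h6,h7⟩ := key b a c d (by linear_combination h) h1 (h2.trans h3) h3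
      exact ⟨h5,h4,h6,h7⟩
  · rcases le_total ‖b‖ ‖c‖ with h3 | h3
    · obtain ⟨h4,h5,h6,h7⟩ := key c a b d (by linear_combination h) (h1.trans h3) h3 h2
      exact ⟨h5,h6,h4,h7⟩
    · obtain ⟨h4,h5,h6,h7⟩ := key b a c d (by linear_combination h) h1 h3 (h2.trans h3)
      exact ⟨h5,h4,h6,h7⟩
  · rcases le_total ‖a‖ ‖d‖ with h3 | h3
    · obtain ⟨h4,h5,h6,h7⟩ := key d a b c (by linear_combination h) h3 (h1.trans h3) h2
      exact ⟨h5,h6,h7,h4⟩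
    · obtain ⟨h4,h5,h6,h7⟩ := key a b c d h h1 (h2.trans h3) h3
      exact ⟨h4,h5,h6,h7⟩
  · rcases le_total ‖a‖ ‖c‖ with h3 | h3
    · obtain ⟨h4,h5,h6,h7⟩ := key c a b d (by linear_combination h) h3 (h1.trans h3) h2
      exact ⟨h5,h6,h4,h7⟩
    · exact key a b c d h h1 h3 (h2.trans h3)

private lemma odd_factor {K : Type*} [Field K] :
    ∀ n (A : K[X]), A.natDegree = n → Odd A.natDegree →
    ∃ m : K[X], m.Monic ∧ Irreducible m ∧ Odd m.natDegree ∧ m ∣ A := by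
  intro n
  induction n using Nat.strong_induction_on with
  | _ n ih =>
    intro A hAn hAodd
    have hA0 : A ≠ 0 := by
      intro h; rw [h, natDegree_zero] at hAodd; simp [Nat.odd_iff] at hAodd
    have hAu : ¬ IsUnit A := by
      intro h; rw [natDegree_eq_zero_of_isUnit h] at hAodd; simp [Nat.odd_iff] at hAodd
    obtain ⟨m, hmi, hmd⟩ := WfDvdMonoid.exists_irreducible_factor hAu hA0
    have hm0 : m ≠ 0 := hmi.ne_zero
    have hml : IsUnit (C m.leadingCoeff⁻¹) :=
      isUnit_C.mpr (isUnit_iff_ne_zero.mpr (inv_ne_zero (leadingCoeff_ne_zero.mpr hm0)))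
    have hassoc : Associated m (m * C m.leadingCoeff⁻¹) := ⟨hml.unit, by simp⟩
    have hdeg' : (m * C m.leadingCoeff⁻¹).natDegree = m.natDegree := by
      rw [natDegree_mul hm0 (by simpa using inv_ne_zero (leadingCoeff_ne_zero.mpr hm0)),
        natDegree_C, add_zero]
    by_cases hodd : Odd m.natDegree
    · exact ⟨m * C m.leadingCoeff⁻¹, monic_mul_leadingCoeff_inv hm0, hassoc.irreducible hmi,
        hdeg' ▸ hodd, dvd_trans hassoc.symm.dvd hmd⟩
    · obtain ⟨A₁, hA₁⟩ := hmd
      have hA₁0 : A₁ ≠ 0 := by rintro rfl; rw [mul_zero] at hA₁; exact hA0 hA₁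
      have hdegs : m.natDegree + A₁.natDegree = n := by
        rw [← hAn, hA₁, natDegree_mul hm0 hA₁0]
      have hmpos : 0 < m.natDegree := hmi.natDegree_pos
      have hA₁odd : Odd A₁.natDegree := by
        rw [Nat.odd_iff] at hAodd ⊢
        rw [Nat.not_odd_iff_even] at hodd
        rcases hodd with ⟨c, hc⟩
        rw [hAn] at hAodd
        omega
      obtain ⟨m₁, h1, h2, h3, h4⟩ := ih A₁.natDegree (by omega) A₁ rfl hA₁odd
      exact ⟨m₁, h1, h2, h3, h4.trans (Dvd.intro_left m hA₁.symm)⟩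

private lemma core {K : Type*} [Field K]
    (hK : ∀ a b c d : K, a^2+b^2+c^2+d^2 = 0 → a = 0 ∧ b = 0 ∧ c = 0 ∧ d = 0) :
    ∀ d : ℕ, Odd d → ∀ e : ℕ, ∀ (m : K[X]) (r : Fin 4 → K[X]),
      Irreducible m → m.natDegree = d →
      (∀ i, (r i).natDegree < d) → (∀ i, (r i).natDegree ≤ e) →
      m ∣ ∑ i, (r i)^2 → ∀ i, r i = 0 := by
  intro d
  induction d using Nat.strong_induction_on with
  | _ d ihd =>
    intro hdodd e
    induction e using Nat.strong_induction_on with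
    | _ e ihe =>
      intro m r hmirr hmdeg hlt hle hdvd
      by_contra hcon
      push_neg at hcon
      obtain ⟨i₀, hi₀⟩ := hcon
      have hdpos : 0 < d := hdodd.pos
      set S : K[X] := ∑ i, (r i)^2 with hS
      have hle' : ∀ i, (r i).natDegree ≤ Finset.univ.sup (fun i => (r i).natDegree) :=
        fun i => Finset.le_sup (f := fun j => (r j).natDegree) (Finset.mem_univ i)
      obtain ⟨i₁, -, hi₁⟩ := Finset.exists_mem_eq_sup (Finset.univ : Finset (Fin 4))
        Finset.univ_nonempty (fun i => (r i).natDegree)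
      set e' : ℕ := Finset.univ.sup (fun i => (r i).natDegree) with he'
      -- find a nonzero witness attaining e'
      obtain ⟨iw, hiw0, hiwd⟩ : ∃ i, r i ≠ 0 ∧ (r i).natDegree = e' := by
        by_cases h1 : r i₁ = 0
        · refine ⟨i₀, hi₀, ?_⟩
          have h2 : e' = 0 := by rw [hi₁, h1, natDegree_zero]
          have h3 := hle' i₀
          omega
        · exact ⟨i₁, h1, hi₁.symm⟩
      have he'd : e' < d := hiwd ▸ hlt iw
      have he'e : e' ≤ e := hiwd ▸ hle iw
      -- coefficient of S at 2*e'
      have hco : ∀ i, ((r i)^2).coeff (2*e') = ((r i).coeff e')^2 := by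
        intro i
        rcases eq_or_lt_of_le (hle' i) with h | h
        · rw [sq, show 2*e' = (r i).natDegree + (r i).natDegree by omega,
            coeff_mul_degree_add_degree, ← sq]
          rw [leadingCoeff, h]
        · rw [coeff_eq_zero_of_natDegree_lt, coeff_eq_zero_of_natDegree_lt h]
          · ring
          · rw [natDegree_pow]; omega
      have hSc : S.coeff (2*e') = ∑ i, ((r i).coeff e')^2 := by
        rw [hS, finset_sum_coeff]
        exact Finset.sum_congr rfl (fun i _ => hco i)
      have hciw : (r iw).coeff e' ≠ 0 := by
        rw [← hiwd]; exact leadingCoeff_ne_zero.mpr hiw0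
      have hScne : S.coeff (2*e') ≠ 0 := by
        rw [hSc, Fin.sum_univ_four]
        intro h
        obtain ⟨z0, z1, z2, z3⟩ := hK _ _ _ _ h
        apply hciw
        fin_cases iw <;> assumption
      have hS0 : S ≠ 0 := fun h => hScne (by rw [h, coeff_zero])
      have hSdeg_le : S.natDegree ≤ 2*e' := by
        apply natDegree_sum_le_of_forall_le
        intro i _
        rw [natDegree_pow]
        have := hle' i
        omega
      have hSdeg : S.natDegree = 2*e' :=
        le_antisymm hSdeg_le (le_natDegree_of_ne_zero hScne)
      have hd2e : d ≤ 2*e' := by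
        have := natDegree_le_of_dvd hdvd hS0
        omega
      obtain ⟨q, hq⟩ := hdvd
      have hq0 : q ≠ 0 := by rintro rfl; rw [mul_zero] at hq; exact hS0 hq
      have hqdeg : q.natDegree = 2*e' - d := by
        have := natDegree_mul hmirr.ne_zero hq0
        rw [← hq, hSdeg, hmdeg] at this
        omega
      have hqodd : Odd q.natDegree := by
        rw [Nat.odd_iff] at hdodd ⊢
        omega
      obtain ⟨m₁, hm₁monic, hm₁irr, hm₁odd, hm₁dvd⟩ := odd_factor q.natDegree q rfl hqodd
      have hd₁pos : 0 < m₁.natDegree := hm₁irr.natDegree_pos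
      have hd₁le : m₁.natDegree ≤ q.natDegree := natDegree_le_of_dvd hm₁dvd hq0
      have hd₁lt : m₁.natDegree < d := by omega
      have hm₁S : m₁ ∣ S := hm₁dvd.trans (Dvd.intro_left m hq.symm)
      have hm₁ne1 : m₁ ≠ 1 := by
        intro h; rw [h, natDegree_one] at hd₁pos; omega
      -- remainders mod m₁
      have hr'lt : ∀ i, (r i %ₘ m₁).natDegree < m₁.natDegree :=
        fun i => natDegree_modByMonic_lt (r i) hm₁monic hm₁ne1
      have hm₁diff : ∀ i : Fin 4, m₁ ∣ ((r i)^2 - (r i %ₘ m₁)^2) := by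
        intro i
        have h1 : r i - r i %ₘ m₁ = m₁ * (r i /ₘ m₁) := by
          have := modByMonic_add_div (r i) m₁
          linear_combination -this
        have : (r i)^2 - (r i %ₘ m₁)^2 = (r i - r i %ₘ m₁) * (r i + r i %ₘ m₁) := by ring
        rw [this, h1]
        exact Dvd.dvd.mul_right (dvd_mul_right m₁ _) _
      have hm₁S' : m₁ ∣ ∑ i, (r i %ₘ m₁)^2 := by
        have h1 : m₁ ∣ ∑ i, ((r i)^2 - (r i %ₘ m₁)^2) :=
          Finset.dvd_sum (fun i _ => hm₁diff i)
        have h1' : m₁ ∣ S - ∑ i, (r i %ₘ m₁)^2 := by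
          rw [hS, ← Finset.sum_sub_distrib]; exact h1
        have h2 := dvd_sub hm₁S h1'
        rwa [sub_sub_cancel] at h2
      -- apply outer IH to m₁ and the remainders
      have hr'0 : ∀ i, r i %ₘ m₁ = 0 :=
        ihd m₁.natDegree hd₁lt hm₁odd m₁.natDegree m₁ (fun i => r i %ₘ m₁) hm₁irr rfl
          hr'lt (fun i => le_of_lt (hr'lt i)) hm₁S'
      have hm₁r : ∀ i, m₁ ∣ r i :=
        fun i => (modByMonic_eq_zero_iff_dvd hm₁monic).mp (hr'0 i)
      have hfact : ∀ i, r i = m₁ * (r i /ₘ m₁) := by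
        intro i
        have := modByMonic_add_div (r i) m₁
        rw [hr'0 i, zero_add] at this
        exact this.symm
      have hT : S = m₁^2 * ∑ i, (r i /ₘ m₁)^2 := by
        rw [hS, Finset.mul_sum]
        apply Finset.sum_congr rfl
        intro i _
        have h2 : (m₁ * (r i /ₘ m₁))^2 = m₁^2 * (r i /ₘ m₁)^2 := by ring
        rw [← hfact i] at h2
        exact h2
      have hmprime : Prime m := UniqueFactorizationMonoid.irreducible_iff_prime.mp hmirr
      have hmnm₁ : ¬ m ∣ m₁ := by
        intro hdvd1
        obtain ⟨u, hu⟩ := hmirr.associated_of_dvd hm₁irr hdvd1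
        have : m₁.natDegree = d := by
          rw [← hu, natDegree_mul hmirr.ne_zero (Units.ne_zero u),
            natDegree_eq_zero_of_isUnit u.isUnit, add_zero, hmdeg]
        omega
      have hmT : m ∣ ∑ i, (r i /ₘ m₁)^2 := by
        have h1 : m ∣ m₁^2 * ∑ i, (r i /ₘ m₁)^2 := by
          rw [← hT]; exact Dvd.intro q hq.symm
        rcases hmprime.2.2 _ _ h1 with h2 | h2
        · exact absurd (hmprime.dvd_of_dvd_pow h2) hmnm₁
        · exact h2
      have he'pos : 0 < e' := by omega
      have htdeg : ∀ i, (r i /ₘ m₁).natDegree ≤ e' - m₁.natDegree := by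
        intro i
        by_cases h0 : r i /ₘ m₁ = 0
        · rw [h0, natDegree_zero]; omega
        · have h1 := natDegree_mul hm₁monic.ne_zero h0
          rw [← hfact i] at h1
          have := hle' i
          omega
      have htlt : ∀ i, (r i /ₘ m₁).natDegree < d := by
        intro i
        have := htdeg i
        omega
      have ht0 : ∀ i, r i /ₘ m₁ = 0 :=
        ihe (e' - m₁.natDegree) (by omega) m (fun i => r i /ₘ m₁) hmirr hmdeg htlt htdeg hmT
      apply hi₀
      rw [hfact i₀, ht0 i₀, mul_zero]

private lemma dvd_of_dvd_sum_sq {K : Type*} [Field K]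
    (hK : ∀ a b c d : K, a^2+b^2+c^2+d^2 = 0 → a = 0 ∧ b = 0 ∧ c = 0 ∧ d = 0)
    (m : K[X]) (hmmonic : m.Monic) (hmirr : Irreducible m) (hmodd : Odd m.natDegree)
    (p : Fin 4 → K[X]) (h : m ∣ ∑ i, (p i)^2) : ∀ i, m ∣ p i := by
  have hmne1 : m ≠ 1 := by
    intro h1
    have := hmirr.natDegree_pos
    rw [h1, natDegree_one] at this; omega
  have hrlt : ∀ i, (p i %ₘ m).natDegree < m.natDegree :=
    fun i => natDegree_modByMonic_lt (p i) hmmonic hmne1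
  have hdiff : ∀ i : Fin 4, m ∣ ((p i)^2 - (p i %ₘ m)^2) := by
    intro i
    have h1 : p i - p i %ₘ m = m * (p i /ₘ m) := by
      have := modByMonic_add_div (p i) m
      linear_combination -this
    have h2 : (p i)^2 - (p i %ₘ m)^2 = (p i - p i %ₘ m) * (p i + p i %ₘ m) := by ring
    rw [h2, h1]
    exact Dvd.dvd.mul_right (dvd_mul_right m _) _
  have hdvd' : m ∣ ∑ i, (p i %ₘ m)^2 := by
    have h1 : m ∣ ∑ i, ((p i)^2 - (p i %ₘ m)^2) := Finset.dvd_sum (fun i _ => hdiff i)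
    have h1' : m ∣ (∑ i, (p i)^2) - ∑ i, (p i %ₘ m)^2 := by
      rw [← Finset.sum_sub_distrib]; exact h1
    have h2 := dvd_sub h h1'
    rwa [sub_sub_cancel] at h2
  have hr0 := core hK m.natDegree hmodd m.natDegree m (fun i => p i %ₘ m) hmirr rfl
    hrlt (fun i => le_of_lt (hrlt i)) hdvd'
  exact fun i => (modByMonic_eq_zero_iff_dvd hmmonic).mp (hr0 i)

private lemma descent {K : Type*} [Field K]
    (hK : ∀ a b c d : K, a^2+b^2+c^2+d^2 = 0 → a = 0 ∧ b = 0 ∧ c = 0 ∧ d = 0) :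
    ∀ j (A B : K[X]) (q : Fin 4 → K[X]), A.natDegree = j → Odd A.natDegree →
    IsCoprime A B → A * B = ∑ i, (q i)^2 → False := by
  intro j
  induction j using Nat.strong_induction_on with
  | _ j ih =>
    intro A B q hAj hAodd hcop heq
    have hA0 : A ≠ 0 := by
      intro h; rw [h, natDegree_zero] at hAodd; simp [Nat.odd_iff] at hAodd
    obtain ⟨m, hmon, hirr, hodd, hdvd⟩ := odd_factor A.natDegree A rfl hAodd
    have hmprime : Prime m := UniqueFactorizationMonoid.irreducible_iff_prime.mp hirr
    have hmS : m ∣ ∑ i, (q i)^2 := heq ▸ hdvd.mul_right B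
    have hq : ∀ i, m ∣ q i := dvd_of_dvd_sum_sq hK m hmon hirr hodd q hmS
    obtain ⟨A₁, hA₁⟩ := hdvd
    have hmB : ¬ m ∣ B := fun h => hirr.not_isUnit (hcop.isUnit_of_dvd' (Dvd.intro A₁ hA₁.symm) h)
    have ht : ∀ i, q i = m * Classical.choose (hq i) :=
      fun i => Classical.choose_spec (hq i)
    set t : Fin 4 → K[X] := fun i => Classical.choose (hq i) with htdef
    have hT : A * B = m^2 * ∑ i, (t i)^2 := by
      rw [heq, Finset.mul_sum]
      exact Finset.sum_congr rfl (fun i _ => by rw [ht i]; ring)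
    have hm0 : m ≠ 0 := hirr.ne_zero
    have hA₁B : A₁ * B = m * ∑ i, (t i)^2 := by
      apply mul_left_cancel₀ hm0
      rw [← mul_assoc, ← hA₁]
      rw [hT]; ring
    have hmA₁ : m ∣ A₁ := by
      rcases hmprime.2.2 A₁ B (Dvd.intro _ hA₁B.symm) with h | h
      · exact h
      · exact absurd h hmB
    obtain ⟨A₂, hA₂⟩ := hmA₁
    have hA₂B : A₂ * B = ∑ i, (t i)^2 := by
      apply mul_left_cancel₀ (pow_ne_zero 2 hm0)
      calc m^2 * (A₂ * B) = m * (m * A₂) * B := by ring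
        _ = A * B := by rw [← hA₂, ← hA₁]
        _ = m^2 * ∑ i, (t i)^2 := hT
    have hA₂0 : A₂ ≠ 0 := by
      rintro rfl; rw [mul_zero] at hA₂; rw [hA₂, mul_zero] at hA₁; exact hA0 hA₁
    have hA₂deg : m.natDegree + (m.natDegree + A₂.natDegree) = j := by
      rw [← hAj, hA₁, hA₂, natDegree_mul hm0 (mul_ne_zero hm0 hA₂0), natDegree_mul hm0 hA₂0]
    have hmpos : 0 < m.natDegree := hirr.natDegree_pos
    have hA₂odd : Odd A₂.natDegree := by
      rw [Nat.odd_iff] at hAodd ⊢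
      rw [hAj] at hAodd
      omega
    have hA₂cop : IsCoprime A₂ B :=
      hcop.of_isCoprime_of_dvd_left ⟨m * m, by rw [hA₁, hA₂]; ring⟩
    exact ih A₂.natDegree (by omega) A₂ B t rfl hA₂odd hA₂cop hA₂B

private lemma exists_sqrt_neg (N : ℤ) (hN : (16 : ℤ) ∣ N + 1) :
    ∃ s : ℚ_[2], s^2 = -(N : ℚ_[2]) := by
  obtain ⟨c, hc⟩ := hN
  set F : Polynomial ℤ_[2] := X^2 + C ((N : ℤ) : ℤ_[2]) with hF
  have hderiv : F.derivative = C 2 * X := by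
    rw [hF]; simp [derivative_X_pow]; rw [one_add_one_eq_two, map_ofNat]
  have heval1 : F.eval 1 = ((N + 1 : ℤ) : ℤ_[2]) := by
    rw [hF]; push_cast; simp; ring
  have hd1 : F.derivative.eval 1 = 2 := by rw [hderiv]; simp
  have hnorm2 : ‖(2 : ℤ_[2])‖ = (1:ℝ)/2 := by
    have := PadicInt.norm_p (p := 2)
    norm_num at this ⊢
    exact this
  have hnormeval : ‖F.eval 1‖ ≤ (1:ℝ)/16 := by
    rw [heval1, hc]
    push_cast
    rw [show ((16:ℤ_[2]) * (c:ℤ_[2])) = (2:ℤ_[2])^4 * c by norm_num]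
    rw [norm_mul, norm_pow, hnorm2]
    calc ((1:ℝ)/2)^4 * ‖(c : ℤ_[2])‖ ≤ ((1:ℝ)/2)^4 * 1 := by
          apply mul_le_mul_of_nonneg_left (PadicInt.norm_le_one _) (by norm_num)
      _ = (1:ℝ)/16 := by norm_num
  have hlt : ‖F.eval 1‖ < ‖F.derivative.eval 1‖^2 := by
    rw [hd1, hnorm2]
    calc ‖F.eval 1‖ ≤ (1:ℝ)/16 := hnormeval
      _ < ((1:ℝ)/2)^2 := by norm_num
  obtain ⟨z, hz, -⟩ := hensels_lemma hlt
  refine ⟨(z : ℚ_[2]), ?_⟩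
  have hz2 : z^2 + ((N:ℤ) : ℤ_[2]) = 0 := by
    rw [hF] at hz; simpa using hz
  have : ((z^2 + ((N:ℤ):ℤ_[2]) : ℤ_[2]) : ℚ_[2]) = 0 := by rw [hz2]; rfl
  rw [PadicInt.coe_add, PadicInt.coe_pow, PadicInt.coe_intCast] at this
  linear_combination this

theorem square_plus_8a_sub_one_minus_const_not_sum_of_four_squares
    (a : ℕ) (ha : 0 < a) (k : ℕ) (g : Polynomial ℤ)
    (hg : g.natDegree = 2 * k + 1)
    (f : Polynomial ℚ)
    (hf : f = (g.map (Int.castRingHom ℚ)) ^ 2 + C ((8 * a - 1 : ℤ) : ℚ))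
    (ℓ : ℕ) (hℓ : 2 ≤ ℓ) :
    ¬ ∃ p₁ p₂ p₃ p₄ : Polynomial ℚ,
        f - C ((1 : ℚ) / 2 ^ (2 * ℓ)) = p₁ ^ 2 + p₂ ^ 2 + p₃ ^ 2 + p₄ ^ 2 := by
  rintro ⟨p₁, p₂, p₃, p₄, hsum⟩
  have hN16 : (16:ℤ) ∣ (2^(2*ℓ) * (8 * a - 1) - 1) + 1 := by
    refine ⟨2^(2*ℓ-4) * (8 * a - 1), ?_⟩
    have h1 : (2:ℤ)^(2*ℓ) = 16 * 2^(2*ℓ-4) := by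
      rw [show (16:ℤ) = 2^4 by norm_num, ← pow_add]
      congr 1
      omega
    rw [h1]; ring
  obtain ⟨s, hs⟩ := exists_sqrt_neg (2^(2*ℓ) * (8 * (a:ℤ) - 1) - 1) hN16
  set N : ℤ := 2^(2*ℓ) * (8 * (a:ℤ) - 1) - 1 with hNdef
  have hNne : N ≠ 0 := by
    intro h
    have h2 : (2:ℤ)^(2*ℓ) = 2 * 2^(2*ℓ-1) := by
      rw [← pow_succ']; congr 1; omega
    rw [hNdef, h2] at h
    have h3 : (2:ℤ) ∣ 1 := ⟨2^(2*ℓ-1) * (8 * (a:ℤ) - 1), by linarith⟩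
    norm_num at h3
  have hs0 : s ≠ 0 := by
    intro h
    rw [h] at hs
    have hN0 : (N : ℚ_[2]) = 0 := by linear_combination hs
    exact hNne (by exact_mod_cast hN0)
  set ψ : ℚ →+* ℚ_[2] := Rat.castHom ℚ_[2] with hψ
  set H : Polynomial ℚ_[2] := (g.map (Int.castRingHom ℚ)).map ψ with hH
  have ht0 : ((2:ℚ_[2])^ℓ) ≠ 0 := pow_ne_zero _ two_ne_zero
  set A : Polynomial ℚ_[2] := C ((2:ℚ_[2])^ℓ) * H - C s with hA
  set B : Polynomial ℚ_[2] := C ((2:ℚ_[2])^ℓ) * H + C s with hB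
  set Q : Fin 4 → Polynomial ℚ_[2] :=
    ![C ((2:ℚ_[2])^ℓ) * p₁.map ψ, C ((2:ℚ_[2])^ℓ) * p₂.map ψ,
      C ((2:ℚ_[2])^ℓ) * p₃.map ψ, C ((2:ℚ_[2])^ℓ) * p₄.map ψ] with hQ
  -- mapped equation
  have hmap : H^2 + C ((((8 * a - 1 : ℤ) : ℚ) : ℚ_[2])) - C ((((1:ℚ)/2^(2*ℓ) : ℚ) : ℚ_[2]))
      = (p₁.map ψ)^2 + (p₂.map ψ)^2 + (p₃.map ψ)^2 + (p₄.map ψ)^2 := by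
    have h0 := congrArg (Polynomial.map ψ) hsum
    rw [hf] at h0
    rw [Polynomial.map_sub, Polynomial.map_add, Polynomial.map_add, Polynomial.map_add,
      Polynomial.map_add, Polynomial.map_pow, Polynomial.map_pow, Polynomial.map_pow,
      Polynomial.map_pow, Polynomial.map_pow, map_C, map_C] at h0
    rw [hψ] at h0 ⊢
    rw [Rat.coe_castHom] at h0
    exact h0
  have hconst : ((2:ℚ_[2])^ℓ)^2 * (((8 * a - 1 : ℤ) : ℚ) : ℚ_[2])
      - ((2:ℚ_[2])^ℓ)^2 * (((1:ℚ)/2^(2*ℓ) : ℚ) : ℚ_[2]) = (N : ℚ_[2]) := by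
    have h2 : ((2:ℚ_[2]))^(2*ℓ) ≠ 0 := pow_ne_zero _ two_ne_zero
    rw [hNdef]
    push_cast
    rw [show (((2:ℚ_[2])^ℓ)^2) = (2:ℚ_[2])^(2*ℓ) by rw [← pow_mul, mul_comm]]
    field_simp
  have hC1 : (C s)^2 = - C ((N : ℚ_[2])) := by
    rw [← map_pow, hs, map_neg]
  have hC2 : (C ((2:ℚ_[2])^ℓ))^2 * C ((((8 * a - 1 : ℤ) : ℚ) : ℚ_[2]))
      - (C ((2:ℚ_[2])^ℓ))^2 * C ((((1:ℚ)/2^(2*ℓ) : ℚ) : ℚ_[2])) = C ((N : ℚ_[2])) := by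
    rw [← map_pow, ← C_mul, ← C_mul, ← C_sub, hconst]
  have hQsum : ∑ i, (Q i)^2 = (C ((2:ℚ_[2])^ℓ))^2 *
      ((p₁.map ψ)^2 + (p₂.map ψ)^2 + (p₃.map ψ)^2 + (p₄.map ψ)^2) := by
    rw [hQ, Fin.sum_univ_four]
    simp only [Matrix.cons_val_zero, Matrix.cons_val_one, Matrix.head_cons,
      Matrix.cons_val_two, Matrix.tail_cons, Matrix.cons_val_three]
    ring
  have hkey : A * B = ∑ i, (Q i)^2 := by
    rw [hQsum, ← hmap, hA, hB]
    linear_combination -hC1 - hC2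
  have hHdeg : H.natDegree = 2*k+1 := by
    rw [hH, natDegree_map_eq_of_injective (RingHom.injective ψ),
      natDegree_map_eq_of_injective Int.cast_injective, hg]
  have hAdeg : A.natDegree = 2*k+1 := by
    rw [hA, natDegree_sub_C, natDegree_C_mul ht0, hHdeg]
  have hAodd : Odd A.natDegree := by rw [hAdeg]; exact ⟨k, by ring⟩
  have h2s : (2*s) ≠ 0 := mul_ne_zero two_ne_zero hs0
  have hcop : IsCoprime A B := by
    refine ⟨-C ((2*s)⁻¹), C ((2*s)⁻¹), ?_⟩
    have h1 : C ((2*s)⁻¹) * C (2*s) = 1 := by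
      rw [← C_mul, inv_mul_cancel₀ h2s, C_1]
    have h2 : C (2*s) = 2 * C s := by
      rw [C_mul, map_ofNat]
    rw [hA, hB]
    linear_combination h1 - C ((2*s)⁻¹) * h2
  exact descent padic_aniso A.natDegree A B Q rfl hAodd hcop hkey
end

section
/- Let f ∈ ℂ[x] be a square-free polynomial of degree d ≥ 1 and let g ∈ ℂ[x] have degree at most d. Regard P(λ, x) = λ·f(x) + g(x) as a polynomial in x of degree d with coefficients in the polynomial ring ℂ[λ], and let R(λ) ∈ ℂ[λ] denote the resultant with respect to x of P and its x-derivative ∂P/∂x. Then R is a nonzero polynomial in λ, and its coefficient in degree 2d − 1 equals the resultant Res_x(f, f'); in particular, there are only finitely many λ ∈ ℂ for which λ·f + g fails to be square-free. -/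
open Polynomial

/-- The Sylvester matrix of two polynomials `f`, `g`, where `f` is regarded as having
degree `m` and `g` as having degree `n`: an `(n + m) × (n + m)` matrix whose first `n`
rows carry the (shifted) coefficients of `f` and whose last `m` rows carry the
(shifted) coefficients of `g`. -/
noncomputable def sylvesterMatrix {R : Type*} [CommRing R]
    (f g : Polynomial R) (m n : ℕ) : Matrix (Fin (n + m)) (Fin (n + m)) R :=
  Matrix.of fun i j =>
    Fin.addCases
      (fun i₁ : Fin n => if (i₁ : ℕ) ≤ (j : ℕ) then f.coeff ((j : ℕ) - (i₁ : ℕ)) else 0)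
      (fun i₂ : Fin m => if (i₂ : ℕ) ≤ (j : ℕ) then g.coeff ((j : ℕ) - (i₂ : ℕ)) else 0) i

/-- The resultant of `f` (regarded as of degree `m`) and `g` (regarded as of degree `n`),
defined as the determinant of their Sylvester matrix. -/
noncomputable def resultant {R : Type*} [CommRing R]
    (f g : Polynomial R) (m n : ℕ) : R :=
  (sylvesterMatrix f g m n).det

lemma coeff_sum_fin {K : Type*} [CommRing K] {n : ℕ} (v : Fin n → K) (k : Fin n) :
    (∑ i : Fin n, C (v i) * X ^ (i : ℕ)).coeff (k : ℕ) = v k := by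
  rw [finset_sum_coeff, Finset.sum_eq_single k]
  · simp
  · intro i _ hne
    simp only [coeff_C_mul, coeff_X_pow]
    rw [if_neg (fun h => hne (Fin.ext h.symm))]
    ring
  · simp

lemma eq_sum_fin {K : Type*} [CommRing K] (a : Polynomial K) {n : ℕ}
    (ha : a.degree < (n : ℕ)) :
    (∑ i : Fin n, C (a.coeff i) * X ^ (i : ℕ)) = a := by
  rcases eq_or_ne a 0 with rfl | h0
  · simp
  · conv_rhs => rw [a.as_sum_range' n ((natDegree_lt_iff_degree_lt h0).mpr ha)]
    rw [← Fin.sum_univ_eq_sum_range]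
    simp [C_mul_X_pow_eq_monomial]

lemma vecMul_sylvester {K : Type*} [CommRing K] (f g : Polynomial K) (m n : ℕ)
    (v : Fin (n + m) → K) (j : Fin (n + m)) :
    Matrix.vecMul v (sylvesterMatrix f g m n) j =
      ((∑ i : Fin n, C (v (Fin.castAdd m i)) * X ^ (i : ℕ)) * f +
       (∑ i : Fin m, C (v (Fin.natAdd n i)) * X ^ (i : ℕ)) * g).coeff (j : ℕ) := by
  rw [coeff_add, Finset.sum_mul, Finset.sum_mul, finset_sum_coeff, finset_sum_coeff]
  have key : ∀ (h : Polynomial K) (c : K) (i k : ℕ),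
      (C c * X ^ i * h).coeff k = c * (if i ≤ k then h.coeff (k - i) else 0) := by
    intro h c i k
    rw [mul_comm (C c * X ^ i) h, ← mul_assoc, coeff_mul_X_pow', ]
    split_ifs with hik
    · rw [coeff_mul_C]; ring
    · simp
  simp only [key]
  rw [Matrix.vecMul, dotProduct, Fin.sum_univ_add]
  congr 1 <;> exact Finset.sum_congr rfl (by intro i _; simp [sylvesterMatrix])

lemma resultant_eq_zero_of_dep {K : Type*} [Field K] {f g a b : Polynomial K} {m n : ℕ}
    (ha : a.degree < (n : ℕ)) (hb : b.degree < (m : ℕ)) (hab : a ≠ 0 ∨ b ≠ 0)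
    (h0 : a * f + b * g = 0) : _root_.resultant f g m n = 0 := by
  rw [_root_.resultant, ← Matrix.exists_vecMul_eq_zero_iff]
  refine ⟨fun i => Fin.addCases (fun i₁ => a.coeff i₁) (fun i₂ => b.coeff i₂) i, ?_, ?_⟩
  · rcases hab with h | h
    · have hlt : a.natDegree < n := (natDegree_lt_iff_degree_lt h).mpr ha
      intro hv
      have := congrFun hv (Fin.castAdd m ⟨a.natDegree, hlt⟩)
      simp only [Fin.addCases_left, Pi.zero_apply] at this
      exact (leadingCoeff_ne_zero.mpr h) this
    · have hlt : b.natDegree < m := (natDegree_lt_iff_degree_lt h).mpr hb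
      intro hv
      have := congrFun hv (Fin.natAdd n ⟨b.natDegree, hlt⟩)
      simp only [Fin.addCases_right, Pi.zero_apply] at this
      exact (leadingCoeff_ne_zero.mpr h) this
  · funext j
    rw [vecMul_sylvester]
    have h1 : (∑ i : Fin n, C ((fun i => Fin.addCases (fun i₁ : Fin n => a.coeff i₁)
        (fun i₂ : Fin m => b.coeff i₂) i) (Fin.castAdd m i)) * X ^ (i : ℕ)) = a := by
      simp only [Fin.addCases_left]
      exact eq_sum_fin a ha
    have h2 : (∑ i : Fin m, C ((fun i => Fin.addCases (fun i₁ : Fin n => a.coeff i₁)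
        (fun i₂ : Fin m => b.coeff i₂) i) (Fin.natAdd n i)) * X ^ (i : ℕ)) = b := by
      simp only [Fin.addCases_right]
      exact eq_sum_fin b hb
    rw [h1, h2, h0]
    simp

lemma exists_dep_of_resultant_eq_zero {K : Type*} [Field K] {f g : Polynomial K} {m n : ℕ}
    (hf : f.degree ≤ (m : ℕ)) (hg : g.degree ≤ (n : ℕ))
    (h : _root_.resultant f g m n = 0) :
    ∃ a b : Polynomial K, a.degree < (n : ℕ) ∧ b.degree < (m : ℕ) ∧
      (a ≠ 0 ∨ b ≠ 0) ∧ a * f + b * g = 0 := by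
  rw [_root_.resultant, ← Matrix.exists_vecMul_eq_zero_iff] at h
  obtain ⟨v, hv, hv0⟩ := h
  set a : Polynomial K := ∑ i : Fin n, C (v (Fin.castAdd m i)) * X ^ (i : ℕ) with ha_def
  set b : Polynomial K := ∑ i : Fin m, C (v (Fin.natAdd n i)) * X ^ (i : ℕ) with hb_def
  have ha : a.degree < (n : ℕ) := degree_sum_fin_lt _
  have hb : b.degree < (m : ℕ) := degree_sum_fin_lt _
  refine ⟨a, b, ha, hb, ?_, ?_⟩
  · by_contra hc
    push_neg at hc
    obtain ⟨ha0, hb0⟩ := hc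
    apply hv
    funext i
    refine Fin.addCases (fun i₁ => ?_) (fun i₂ => ?_) i
    · have := coeff_sum_fin (fun i : Fin n => v (Fin.castAdd m i)) i₁
      rw [← ha_def] at this
      rw [← this, ha0, coeff_zero]; rfl
    · have := coeff_sum_fin (fun i : Fin m => v (Fin.natAdd n i)) i₂
      rw [← hb_def] at this
      rw [← this, hb0, coeff_zero]; rfl
  · have hdeg : (a * f + b * g).degree < ((n + m : ℕ) : WithBot ℕ) := by
      apply lt_of_le_of_lt (degree_add_le _ _)
      rw [max_lt_iff]
      constructor
      · apply lt_of_le_of_lt (degree_mul_le _ _)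
        calc a.degree + f.degree < (n : ℕ) + (m : ℕ) := by
              rcases eq_or_ne f 0 with hf0 | hf0
              · simp [hf0]
              · exact WithBot.add_lt_add_of_lt_of_le (mt degree_eq_bot.mp hf0) ha hf
          _ = ((n + m : ℕ) : WithBot ℕ) := by push_cast; ring
      · apply lt_of_le_of_lt (degree_mul_le _ _)
        calc b.degree + g.degree < (m : ℕ) + (n : ℕ) := by
              rcases eq_or_ne g 0 with hg0 | hg0
              · simp [hg0]
              · exact WithBot.add_lt_add_of_lt_of_le (mt degree_eq_bot.mp hg0) hb hg
          _ = ((n + m : ℕ) : WithBot ℕ) := by push_cast; ring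
    ext k
    rcases lt_or_ge k (n + m) with hk | hk
    · have := congrFun hv0 ⟨k, hk⟩
      rw [vecMul_sylvester] at this
      simpa using this
    · rw [coeff_eq_zero_of_degree_lt (lt_of_lt_of_le hdeg (by exact_mod_cast hk)), coeff_zero]

lemma resultant_deriv_ne_zero {f : Polynomial ℂ} {d : ℕ} (hd : 1 ≤ d)
    (hdeg : f.natDegree = d) (hsf : Squarefree f) :
    _root_.resultant f (derivative f) d (d - 1) ≠ 0 := by
  intro h
  have hf0 : f ≠ 0 := hsf.ne_zero
  have hfd : f.degree = (d : ℕ) := by rw [degree_eq_natDegree hf0, hdeg]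
  have hfd' : (derivative f).degree ≤ ((d - 1 : ℕ) : WithBot ℕ) :=
    degree_le_natDegree.trans (by
      exact_mod_cast (natDegree_derivative_le f).trans (by rw [hdeg]))
  obtain ⟨a, b, ha, hb, hab, h0⟩ := exists_dep_of_resultant_eq_zero hfd.le hfd' h
  have hcop : IsCoprime f (derivative f) := PerfectField.separable_iff_squarefree.mpr hsf
  have hdvd : f ∣ b * derivative f := ⟨-a, by linear_combination h0⟩
  have hbz : b = 0 := eq_zero_of_dvd_of_degree_lt (hcop.dvd_of_dvd_mul_right hdvd)
    (by rw [hfd]; exact hb)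
  rw [hbz, zero_mul, add_zero, mul_eq_zero] at h0
  rcases h0 with h0 | h0
  · exact hab.elim (fun h' => h' h0) (fun h' => h' hbz)
  · exact hf0 h0

lemma resultant_deriv_eq_zero {h : Polynomial ℂ} {d : ℕ} (hd : 1 ≤ d)
    (hdeg : h.natDegree ≤ d) (hn : ¬ Squarefree h) :
    _root_.resultant h (derivative h) d (d - 1) = 0 := by
  rcases eq_or_ne h 0 with rfl | h0
  · have hz : sylvesterMatrix (0 : Polynomial ℂ) (derivative 0) d (d - 1) = 0 := by
      ext i j
      refine Fin.addCases (fun i₁ => ?_) (fun i₂ => ?_) i <;>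
        simp [sylvesterMatrix]
    have : Nonempty (Fin (d - 1 + d)) := ⟨⟨0, by omega⟩⟩
    rw [_root_.resultant, hz, Matrix.det_zero]
  · rw [Squarefree] at hn
    push_neg at hn
    obtain ⟨p, hp2, hpu⟩ := hn
    have hp0 : p ≠ 0 := by rintro rfl; rw [zero_mul] at hp2; exact h0 (zero_dvd_iff.mp hp2)
    have hpd : 1 ≤ p.natDegree := by
      by_contra hc
      push_neg at hc
      interval_cases hpn : p.natDegree
      have hpc : p = C (p.coeff 0) := eq_C_of_natDegree_eq_zero hpn
      refine hpu (hpc ▸ isUnit_C.mpr (isUnit_iff_ne_zero.mpr (fun hcc => hp0 ?_)))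
      rw [hpc, hcc, map_zero]
    obtain ⟨q, hq⟩ := hp2
    have hq0 : q ≠ 0 := by rintro rfl; rw [mul_zero] at hq; exact h0 hq
    have hpq0 : p * q ≠ 0 := mul_ne_zero hp0 hq0
    set c : Polynomial ℂ := derivative p * q + derivative p * q + p * derivative q with hc_def
    have hc : derivative h = p * c := by
      rw [hq, hc_def]
      simp only [derivative_mul]
      ring
    have hnd : h.natDegree = p.natDegree + (p * q).natDegree := by
      rw [hq, mul_assoc, natDegree_mul hp0 hpq0]
    apply resultant_eq_zero_of_dep (a := c) (b := -(p * q)) ?_ ?_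
      (Or.inr (neg_ne_zero.mpr hpq0)) (by rw [hc, hq]; ring)
    · rcases eq_or_ne c 0 with hc0 | hc0
      · rw [hc0, degree_zero]
        exact WithBot.bot_lt_coe _
      · have hh'0 : derivative h ≠ 0 := by rw [hc]; exact mul_ne_zero hp0 hc0
        have hnd' : (derivative h).natDegree = p.natDegree + c.natDegree := by
          rw [hc, natDegree_mul hp0 hc0]
        have hle : (derivative h).natDegree ≤ d - 1 :=
          (natDegree_derivative_le h).trans (by omega)
        exact (natDegree_lt_iff_degree_lt hc0).mp (by omega)
    · rw [degree_neg]
      exact (natDegree_lt_iff_degree_lt hpq0).mp (by omega)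

lemma resultant_map {S T : Type*} [CommRing S] [CommRing T] (φ : S →+* T)
    (f g : Polynomial S) (m n : ℕ) :
    φ (_root_.resultant f g m n) = _root_.resultant (f.map φ) (g.map φ) m n := by
  rw [_root_.resultant, _root_.resultant, RingHom.map_det]
  congr 1
  ext i j
  refine Fin.addCases (fun i₁ => ?_) (fun i₂ => ?_) i <;>
    simp [sylvesterMatrix, Matrix.map_apply, apply_ite φ, coeff_map]

lemma sylvester_linear (f₀ g₀ f₁ g₁ : Polynomial ℂ) (m n : ℕ) :
    sylvesterMatrix (C (X : Polynomial ℂ) * f₀.map C + g₀.map C)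
        (C (X : Polynomial ℂ) * f₁.map C + g₁.map C) m n =
      (X : Polynomial ℂ) • (sylvesterMatrix f₀ f₁ m n).map C +
        (sylvesterMatrix g₀ g₁ m n).map C := by
  refine Matrix.ext fun i j => ?_
  refine Fin.addCases (fun i₁ => ?_) (fun i₂ => ?_) i <;>
  · simp only [sylvesterMatrix, Matrix.add_apply, Matrix.smul_apply, Matrix.map_apply,
      Matrix.of_apply, Fin.addCases_left, Fin.addCases_right, smul_eq_mul]
    split_ifs
    · rw [coeff_add, coeff_C_mul, coeff_map, coeff_map, mul_comm (X : Polynomial ℂ)]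
    · simp

theorem resultant_of_pencil_nonzero
    (f g : Polynomial ℂ) (d : ℕ) (hd : 1 ≤ d) (hdeg : f.natDegree = d)
    (hsf : Squarefree f) (hg : g.natDegree ≤ d)
    (P : Polynomial (Polynomial ℂ))
    (hP : P = Polynomial.C (Polynomial.X : Polynomial ℂ) * f.map Polynomial.C +
            g.map Polynomial.C)
    (R : Polynomial ℂ)
    (hR : R = _root_.resultant P (Polynomial.derivative P) d (d - 1)) :
    R ≠ 0 ∧
    R.coeff (2 * d - 1) = _root_.resultant f (Polynomial.derivative f) d (d - 1) ∧
    {lam : ℂ | ¬ Squarefree (Polynomial.C lam * f + g)}.Finite := by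
  have hP' : derivative P = C (X : Polynomial ℂ) * (derivative f).map C +
      (derivative g).map C := by
    rw [hP, derivative_add, derivative_C_mul, derivative_map, derivative_map]
  have hM : sylvesterMatrix P (derivative P) d (d - 1) =
      (X : Polynomial ℂ) • (sylvesterMatrix f (derivative f) d (d - 1)).map C +
        (sylvesterMatrix g (derivative g) d (d - 1)).map C := by
    rw [hP', hP]
    exact sylvester_linear f g (derivative f) (derivative g) d (d - 1)
  have hcard : Fintype.card (Fin (d - 1 + d)) = 2 * d - 1 := by
    rw [Fintype.card_fin]; omega
  have hcoeff : R.coeff (2 * d - 1) = _root_.resultant f (derivative f) d (d - 1) := by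
    rw [hR, _root_.resultant, hM, ← hcard, Polynomial.coeff_det_X_add_C_card]
    rfl
  have hA : _root_.resultant f (derivative f) d (d - 1) ≠ 0 :=
    resultant_deriv_ne_zero hd hdeg hsf
  have hR0 : R ≠ 0 := fun h => hA (by rw [← hcoeff, h, coeff_zero])
  refine ⟨hR0, hcoeff, ?_⟩
  apply Set.Finite.subset (finite_setOf_isRoot hR0)
  intro lam hlam
  simp only [Set.mem_setOf_eq] at hlam ⊢
  show eval lam R = 0
  have hcomp : (evalRingHom lam).comp (C : ℂ →+* Polynomial ℂ) = RingHom.id ℂ := by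
    ext x; simp
  have hmapP : P.map (evalRingHom lam) = C lam * f + g := by
    rw [hP, Polynomial.map_add, Polynomial.map_mul, map_C, Polynomial.map_map,
      Polynomial.map_map, hcomp, Polynomial.map_id, Polynomial.map_id]
    simp
  have heval : eval lam R = _root_.resultant (C lam * f + g)
      (derivative (C lam * f + g)) d (d - 1) := by
    calc eval lam R = (evalRingHom lam) (_root_.resultant P (derivative P) d (d - 1)) := by
          rw [hR]; rfl
      _ = _root_.resultant (P.map (evalRingHom lam)) ((derivative P).map (evalRingHom lam))
            d (d - 1) := resultant_map _ _ _ _ _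
      _ = _root_.resultant (C lam * f + g) (derivative (C lam * f + g)) d (d - 1) := by
          rw [← derivative_map, hmapP]
  rw [heval]
  apply resultant_deriv_eq_zero hd ?_ hlam
  calc (C lam * f + g).natDegree ≤ max (C lam * f).natDegree g.natDegree :=
        natDegree_add_le _ _
    _ ≤ d := max_le ((natDegree_C_mul_le lam f).trans hdeg.le) hg
end

section
/- Let f ∈ ℤ[x] be a square-free polynomial of degree d = 2(2k + 1) with k ≥ 0, such that f(t) > 0 for all t ∈ ℝ, and assume the constant coefficient f(0) IS of the form 2^{2a}·(8b + 1) for some nonnegative integers a, b. Then there exists ℓ₀ ∈ ℕ such that for every ℓ ≥ ℓ₀ the polynomial f(x) − 2^{−2ℓ}·(x² + x + 1)^{2k}·x² is NOT a sum of four squares in ℚ[x]. -/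
/-!
Write `g = f - 4⁻ˡ (x² + x + 1)²ᵏ x²`. The form `x² + y² + z² + w²` is anisotropic over `ℚ₂`
(divide by the entry of largest norm and reduce mod 8), so if `g = ∑ pᵢ²` then at any root of `g`
in `ℚ₂` all `pᵢ` vanish, and so does `g' = ∑ 2 pᵢ pᵢ'`: `g` has no simple root in `ℚ₂`.
On the other hand, if `f(0) = 4ᵃ (8b + 1)` and `N = 2^(ℓ + a)`, then `F(y) = 4⁻ᵃ g(N y)` has integer
coefficients and `F ≡ 8b + 1 - y² (mod 8)` once `ℓ ≥ a + 3`, so `y = 1` lifts by Hensel's lemma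
to a simple root of `F` in `ℤ₂`, i.e. to a simple root of `g` in `ℚ₂`.
-/

open Polynomial

namespace Polynomial

def IsSimpleRoot {R A : Type*} [CommRing R] [CommRing A] [Algebra R A] (p : R[X]) (α : A) :
    Prop :=
  aeval α p = 0 ∧ aeval α (derivative p) ≠ 0

theorem isSimpleRoot_map_algebraMap_iff {R S A : Type*} [CommRing R] [CommRing S] [CommRing A]
    [Algebra R S] [Algebra S A] [Algebra R A] [IsScalarTower R S A] {p : R[X]} {α : A} :
    IsSimpleRoot (p.map (algebraMap R S)) α ↔ IsSimpleRoot p α := by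
  simp [IsSimpleRoot, derivative_map, aeval_map_algebraMap]

theorem IsSimpleRoot.of_C_mul_eq_comp {K L : Type*} [Field K] [CommRing L] [Algebra K L]
    {g F : K[X]} {c e : K} (he : e ≠ 0) (hcomp : C e * F = g.comp (C c * X)) {α : L}
    (hα : IsSimpleRoot F α) : IsSimpleRoot g (algebraMap K L c * α) := by
  have hunit : IsUnit (algebraMap K L e) := (IsUnit.mk0 e he).map _
  have hval := congrArg (aeval α) hcomp
  have hder := congrArg (fun p => aeval α (derivative p)) hcomp
  simp only [derivative_comp, derivative_mul, derivative_C, derivative_X, zero_mul, zero_add,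
    mul_one, map_mul, aeval_C, aeval_comp, aeval_X] at hval hder
  refine ⟨by rw [← hval, hα.1, mul_zero], fun h0 => hα.2 ?_⟩
  rwa [h0, mul_zero, hunit.mul_right_eq_zero] at hder

theorem not_isSimpleRoot_sq_add_sq_add_sq_add_sq {R A : Type*} [CommRing R] [CommRing A]
    [Algebra R A]
    (hA : ∀ x y z w : A, x ^ 2 + y ^ 2 + z ^ 2 + w ^ 2 = 0 → x = 0 ∧ y = 0 ∧ z = 0 ∧ w = 0)
    (p₁ p₂ p₃ p₄ : R[X]) (α : A) : ¬ IsSimpleRoot (p₁ ^ 2 + p₂ ^ 2 + p₃ ^ 2 + p₄ ^ 2) α := by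
  rintro ⟨hα, hα'⟩
  simp only [map_add, map_pow] at hα
  obtain ⟨h₁, h₂, h₃, h₄⟩ := hA _ _ _ _ hα
  simp [derivative_pow, h₁, h₂, h₃, h₄] at hα'

end Polynomial

theorem ZMod.one_add_sq_add_sq_add_sq_ne_zero_eight :
    ∀ b c d : ZMod 8, 1 + b ^ 2 + c ^ 2 + d ^ 2 ≠ 0 := by
  decide

theorem Padic.eq_zero_of_sq_add_sq_add_sq_add_sq_eq_zero_of_norm_le {x y z w : ℚ_[2]}
    (h : x ^ 2 + y ^ 2 + z ^ 2 + w ^ 2 = 0)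
    (hy : ‖y‖ ≤ ‖x‖) (hz : ‖z‖ ≤ ‖x‖) (hw : ‖w‖ ≤ ‖x‖) : x = 0 := by
  by_contra hx
  have hquot {t : ℚ_[2]} (ht : ‖t‖ ≤ ‖x‖) : ‖t / x‖ ≤ 1 := by
    rw [norm_div]; exact div_le_one_of_le₀ ht (norm_nonneg x)
  let y' : ℤ_[2] := ⟨y / x, hquot hy⟩
  let z' : ℤ_[2] := ⟨z / x, hquot hz⟩
  let w' : ℤ_[2] := ⟨w / x, hquot hw⟩
  have h' : 1 + y' ^ 2 + z' ^ 2 + w' ^ 2 = 0 := by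
    apply PadicInt.ext
    simp only [PadicInt.coe_add, PadicInt.coe_pow, PadicInt.coe_one, PadicInt.coe_zero]
    show 1 + (y / x) ^ 2 + (z / x) ^ 2 + (w / x) ^ 2 = 0
    field_simp
    linear_combination h
  apply ZMod.one_add_sq_add_sq_add_sq_ne_zero_eight
    (PadicInt.toZModPow 3 y') (PadicInt.toZModPow 3 z') (PadicInt.toZModPow 3 w')
  simpa using congrArg (PadicInt.toZModPow 3) h'

theorem Padic.sq_add_sq_add_sq_add_sq_eq_zero {x y z w : ℚ_[2]}
    (h : x ^ 2 + y ^ 2 + z ^ 2 + w ^ 2 = 0) : x = 0 ∧ y = 0 ∧ z = 0 ∧ w = 0 := by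
  set M := max (max ‖x‖ ‖y‖) (max ‖z‖ ‖w‖) with hM_def
  have hx : ‖x‖ ≤ M := le_max_of_le_left (le_max_left _ _)
  have hy : ‖y‖ ≤ M := le_max_of_le_left (le_max_right _ _)
  have hz : ‖z‖ ≤ M := le_max_of_le_right (le_max_left _ _)
  have hw : ‖w‖ ≤ M := le_max_of_le_right (le_max_right _ _)
  have hM : M ≤ 0 := by
    obtain hM | hM | hM | hM : M = ‖x‖ ∨ M = ‖y‖ ∨ M = ‖z‖ ∨ M = ‖w‖ := by
      rcases max_choice (max ‖x‖ ‖y‖) (max ‖z‖ ‖w‖) with h₁ | h₁ <;>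
        [rcases max_choice ‖x‖ ‖y‖ with h₂ | h₂; rcases max_choice ‖z‖ ‖w‖ with h₂ | h₂] <;>
        (rw [hM_def, h₁, h₂]; simp)
    all_goals rw [hM] at hx hy hz hw ⊢
    · simp [eq_zero_of_sq_add_sq_add_sq_add_sq_eq_zero_of_norm_le h hy hz hw]
    · simp [eq_zero_of_sq_add_sq_add_sq_add_sq_eq_zero_of_norm_le
        (x := y) (y := x) (by linear_combination h) hx hz hw]
    · simp [eq_zero_of_sq_add_sq_add_sq_add_sq_eq_zero_of_norm_le
        (x := z) (z := x) (by linear_combination h) hy hx hw]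
    · simp [eq_zero_of_sq_add_sq_add_sq_add_sq_eq_zero_of_norm_le
        (x := w) (w := x) (by linear_combination h) hy hz hx]
  refine ⟨?_, ?_, ?_, ?_⟩ <;> rw [← norm_le_zero_iff] <;> linarith

theorem PadicInt.exists_isSimpleRoot_of_dvd {p : ℕ} [Fact p.Prime] (F : ℤ[X]) (a : ℤ) (n : ℕ)
    (hF : (p : ℤ) ^ (2 * n + 1) ∣ F.eval a) (hF' : ¬ (p : ℤ) ^ (n + 1) ∣ F.derivative.eval a) :
    ∃ α : ℚ_[p], IsSimpleRoot F α := by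
  have haeval (G : ℤ[X]) : aeval (a : ℤ_[p]) G = ((G.eval a : ℤ) : ℤ_[p]) := by
    rw [← eq_intCast (algebraMap ℤ ℤ_[p]), aeval_algebraMap_apply_eq_algebraMap_eval, eq_intCast]
  have hval : ‖aeval (a : ℤ_[p]) F‖ ≤ (p : ℝ) ^ (-(2 * n + 1 : ℕ) : ℤ) := by
    rw [haeval, norm_int_le_pow_iff_dvd]
    exact_mod_cast hF
  have hder : (p : ℝ) ^ (-n : ℤ) ≤ ‖aeval (a : ℤ_[p]) (derivative F)‖ := by
    have := mt norm_int_le_pow_iff_dvd.1 (by exact_mod_cast hF')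
    rw [← haeval, norm_le_pow_iff_norm_lt_pow_add_one] at this
    rwa [Nat.cast_succ, neg_add, neg_add_cancel_right, not_lt] at this
  have hp : (1 : ℝ) < p := mod_cast (Fact.out : p.Prime).one_lt
  have hnorm : ‖aeval (a : ℤ_[p]) F‖ < ‖aeval (a : ℤ_[p]) (derivative F)‖ ^ 2 := by
    calc _ ≤ (p : ℝ) ^ (-(2 * n + 1 : ℕ) : ℤ) := hval
      _ < ((p : ℝ) ^ (-n : ℤ)) ^ 2 := by
        rw [← zpow_natCast, ← zpow_mul]; gcongr; push_cast; linarith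
      _ ≤ _ := by gcongr
  obtain ⟨z, hz, -, hz', -⟩ := hensels_lemma hnorm
  have hcoe (G : ℤ[X]) : aeval (z : ℚ_[p]) G = aeval z G := by
    rw [← PadicInt.algebraMap_apply, aeval_algebraMap_apply, PadicInt.algebraMap_apply]
  refine ⟨z, by simp [hcoe, hz], ?_⟩
  rw [hcoe, Ne, PadicInt.coe_eq_zero, ← norm_eq_zero, hz']
  exact ((zpow_pos (by linarith) _).trans_le hder).ne'

namespace Polynomial

theorem C_dvd_comp_C_mul_X {R : Type*} [CommRing R] {f : R[X]} {e N : R}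
    (h0 : e ∣ f.coeff 0) (hN : e ∣ N) : C e ∣ f.comp (C N * X) := by
  rw [C_dvd_iff_dvd_coeff]
  rintro (_ | j)
  · simpa using h0
  · rw [comp_C_mul_X_coeff]
    exact dvd_mul_of_dvd_right (dvd_pow hN j.succ_ne_zero) _

section Rescaling

variable {R : Type*} [CommRing R] [IsDomain R] {f h : R[X]} {e M : R}

theorem dvd_eval_one_sub_of_comp_eq {c : R} (he : e ≠ 0)
    (hh : f.comp (C (e * M) * X) = C e * h) (hc : f.coeff 0 = e * c) : M ∣ h.eval 1 - c := by
  obtain ⟨t, ht⟩ := sub_dvd_eval_sub (e * M) 0 f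
  refine ⟨t, mul_left_cancel₀ he ?_⟩
  have h1 := congrArg (eval 1) hh
  simp only [eval_comp, eval_mul, eval_C, eval_X, mul_one] at h1
  rw [← coeff_zero_eq_eval_zero, hc, h1] at ht
  linear_combination ht

theorem derivative_eval_one_of_comp_eq (he : e ≠ 0) (hh : f.comp (C (e * M) * X) = C e * h) :
    h.derivative.eval 1 = M * f.derivative.eval (e * M) := by
  have h1 := congrArg (fun p => (derivative p).eval 1) hh
  simp only [derivative_comp, derivative_mul, derivative_C, derivative_X, eval_mul, eval_comp,
    eval_C, eval_X, zero_mul, zero_add, mul_one] at h1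
  exact mul_left_cancel₀ he (by linear_combination -h1)

end Rescaling

theorem eight_dvd_eval_one_and_not_four_dvd_derivative_eval_one {F h : ℤ[X]} {M N c : ℤ}
    {k : ℕ} (hF : F = h - X ^ 2 * (C (N ^ 2) * X ^ 2 + C N * X + 1) ^ (2 * k))
    (hM : 8 ∣ M) (hN : 8 ∣ N) (hc : 8 ∣ c - 1) (h1 : M ∣ h.eval 1 - c)
    (h1' : M ∣ h.derivative.eval 1) :
    8 ∣ F.eval 1 ∧ ¬ 4 ∣ F.derivative.eval 1 := by
  have h8 : ((h.eval 1 - 1 : ℤ) : ZMod 8) = 0 :=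
    (ZMod.intCast_zmod_eq_zero_iff_dvd _ 8).2 (by simpa using dvd_add (hM.trans h1) hc)
  push_cast [sub_eq_zero] at h8
  have h4 : ((h.derivative.eval 1 : ℤ) : ZMod 4) = 0 :=
    (ZMod.intCast_zmod_eq_zero_iff_dvd _ 4).2 ((dvd_trans (by norm_num) hM).trans h1')
  have hN8 : (N : ZMod 8) = 0 := (ZMod.intCast_zmod_eq_zero_iff_dvd N 8).2 hN
  have hN4 : (N : ZMod 4) = 0 :=
    (ZMod.intCast_zmod_eq_zero_iff_dvd N 4).2 (dvd_trans (by norm_num) hN)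
  constructor
  · rw [show (8 : ℤ) = ((8 : ℕ) : ℤ) by norm_num, ← ZMod.intCast_zmod_eq_zero_iff_dvd]
    simp [hF, h8, hN8]
  · rw [show (4 : ℤ) = ((4 : ℕ) : ℤ) by norm_num, ← ZMod.intCast_zmod_eq_zero_iff_dvd]
    simp [hF, h4, hN4, derivative_pow]
    decide

theorem C_mul_map_sub_eq_comp {f h : ℤ[X]} {e N : ℤ} {s : ℚ} (k : ℕ)
    (hh : f.comp (C N * X) = C e * h) (hs : s * N ^ 2 = e) :
    C (e : ℚ) * (h - X ^ 2 * (C (N ^ 2) * X ^ 2 + C N * X + 1) ^ (2 * k)).map (Int.castRingHom ℚ) =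
      (f.map (Int.castRingHom ℚ) - C s * ((X ^ 2 + X + 1) ^ (2 * k) * X ^ 2)).comp
        (C (N : ℚ) * X) := by
  have hhℚ := congrArg (map (Int.castRingHom ℚ)) hh
  simp only [map_comp, Polynomial.map_mul, map_C, map_X, Int.coe_castRingHom] at hhℚ
  have hsC : C s * C (N : ℚ) ^ 2 = C (e : ℚ) := by rw [← C_pow, ← C_mul, hs]
  rw [sub_comp, hhℚ]
  simp only [Polynomial.map_sub, Polynomial.map_mul, Polynomial.map_pow, Polynomial.map_add,
    map_C, map_X, Polynomial.map_one, Int.coe_castRingHom, mul_comp, pow_comp, add_comp, X_comp,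
    one_comp, C_comp, C_pow]
  linear_combination (X ^ 2 * (C (N : ℚ) ^ 2 * X ^ 2 + C (N : ℚ) * X + 1) ^ (2 * k)) * hsC

end Polynomial

theorem exists_isSimpleRoot_padic_two (f : ℤ[X]) (k a b ℓ : ℕ) (hℓ : a + 3 ≤ ℓ)
    (hc : f.coeff 0 = 2 ^ (2 * a) * (8 * b + 1)) :
    ∃ α : ℚ_[2], IsSimpleRoot (f.map (Int.castRingHom ℚ) -
      C ((1 : ℚ) / 2 ^ (2 * ℓ)) * ((X ^ 2 + X + 1) ^ (2 * k) * X ^ 2)) α := by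
  obtain ⟨n, rfl⟩ := Nat.exists_eq_add_of_le hℓ
  set e : ℤ := 2 ^ (2 * a) with he_def
  set M : ℤ := 2 ^ (n + 3) with hM_def
  have he : e ≠ 0 := by positivity
  have hM : 8 ∣ M := pow_dvd_pow 2 (Nat.le_add_left 3 n)
  obtain ⟨h, hh⟩ := C_dvd_comp_C_mul_X (f := f) (N := e * M) ⟨_, hc⟩ (dvd_mul_right e M)
  set F := h - X ^ 2 * (C ((e * M) ^ 2) * X ^ 2 + C (e * M) * X + 1) ^ (2 * k) with hF_def
  obtain ⟨hF, hF'⟩ := eight_dvd_eval_one_and_not_four_dvd_derivative_eval_one hF_def hM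
    (hM.trans (dvd_mul_left M e)) (by simp) (dvd_eval_one_sub_of_comp_eq he hh hc)
    (by rw [derivative_eval_one_of_comp_eq he hh]; exact dvd_mul_right _ _)
  obtain ⟨β, hβ⟩ := PadicInt.exists_isSimpleRoot_of_dvd (p := 2) F 1 1 (by simpa using hF)
    (by simpa using hF')
  have hcomp := C_mul_map_sub_eq_comp (s := 1 / 2 ^ (2 * (a + 3 + n))) k hh (by
    simp only [he_def, hM_def]; push_cast; field_simp; ring)
  rw [← algebraMap_int_eq] at hcomp
  exact ⟨_, (isSimpleRoot_map_algebraMap_iff.2 hβ).of_C_mul_eq_comp (by exact_mod_cast he) hcomp⟩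

theorem deg_twice_odd_minus_power_not_sum_of_four_squares_general
    (f : Polynomial ℤ) (k : ℕ)
    (hc : ∃ a b : ℕ, f.coeff 0 = 2 ^ (2 * a) * (8 * b + 1)) :
    ∃ ℓ₀ : ℕ, ∀ ℓ : ℕ, ℓ₀ ≤ ℓ →
      ¬ ∃ p₁ p₂ p₃ p₄ : Polynomial ℚ,
        f.map (Int.castRingHom ℚ) -
            C ((1 : ℚ) / 2 ^ (2 * ℓ)) * ((X ^ 2 + X + 1) ^ (2 * k) * X ^ 2) =
          p₁ ^ 2 + p₂ ^ 2 + p₃ ^ 2 + p₄ ^ 2 := by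
  obtain ⟨a, b, hc⟩ := hc
  refine ⟨a + 3, fun ℓ hℓ ⟨p₁, p₂, p₃, p₄, hsum⟩ => ?_⟩
  obtain ⟨α, hα⟩ := exists_isSimpleRoot_padic_two f k a b ℓ hℓ hc
  rw [hsum] at hα
  exact not_isSimpleRoot_sq_add_sq_add_sq_add_sq
    (fun _ _ _ _ => Padic.sq_add_sq_add_sq_add_sq_eq_zero) _ _ _ _ _ hα

theorem deg_twice_odd_minus_power_not_sum_of_four_squares
    (f : Polynomial ℤ) (k : ℕ) (hdeg : f.natDegree = 2 * (2 * k + 1))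
    (hsf : ∀ p : Polynomial ℤ, 0 < p.natDegree → ¬ p ^ 2 ∣ f)
    (hpos : ∀ t : ℝ, 0 < Polynomial.aeval t f)
    (hc : ∃ a b : ℕ, f.coeff 0 = 2 ^ (2 * a) * (8 * b + 1)) :
    ∃ ℓ₀ : ℕ, ∀ ℓ : ℕ, ℓ₀ ≤ ℓ →
      ¬ ∃ p₁ p₂ p₃ p₄ : Polynomial ℚ,
        f.map (Int.castRingHom ℚ) -
            C ((1 : ℚ) / 2 ^ (2 * ℓ)) * ((X ^ 2 + X + 1) ^ (2 * k) * X ^ 2) =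
          p₁ ^ 2 + p₂ ^ 2 + p₃ ^ 2 + p₄ ^ 2 :=
  deg_twice_odd_minus_power_not_sum_of_four_squares_general f k hc
end

section
/- Let f(x) = 4x⁶ + 4x³ + 9 ∈ ℚ[x]. Then: (i) for every rational number α, the image of f(α) in ℚ₂ is a square in ℚ₂; and (ii) there is no polynomial h ∈ ℚ[x] with h² = f. -/
open Polynomial

lemma sq_of_close_one (c : ℚ_[2]) (h : ‖c - 1‖ < 1/4) : IsSquare c := by
  have hc1 : ‖c‖ ≤ 1 := by
    calc ‖c‖ = ‖(c - 1) + 1‖ := by ring_nf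
      _ ≤ max ‖c - 1‖ ‖(1:ℚ_[2])‖ := Padic.nonarchimedean _ _
      _ ≤ 1 := by rw [norm_one]; apply max_le (by linarith) le_rfl
  set C : ℤ_[2] := ⟨c, hc1⟩ with hC
  have hd : ‖((X^2 - Polynomial.C C).derivative.eval (1 : ℤ_[2]))‖ ^ 2 = 1/4 := by
    have : (X^2 - Polynomial.C C).derivative = Polynomial.C 2 * X := by
      simp [Polynomial.derivative_pow]
    rw [this]
    have h2 : ‖(2 : ℤ_[2])‖ = 1/2 := by
      have := @PadicInt.norm_p 2 _
      norm_num at this ⊢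
      exact this
    simp [h2]
    norm_num
  have hv : ‖(X^2 - Polynomial.C C).eval (1 : ℤ_[2])‖ < ‖((X^2 - Polynomial.C C).derivative.eval (1 : ℤ_[2]))‖ ^ 2 := by
    rw [hd]
    have : (X^2 - Polynomial.C C).eval (1 : ℤ_[2]) = 1 - C := by simp
    rw [this]
    have : ‖(1 - C : ℤ_[2])‖ = ‖c - 1‖ := by
      rw [PadicInt.norm_def]
      push_cast [hC]
      rw [← norm_neg]; ring_nf
      simp [PadicInt.coe_sub]; show ‖(1:ℚ_[2]) - c‖ = _; rw [← norm_neg]; ring_nf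
    rw [this]; linarith
  obtain ⟨z, hz, -⟩ := hensels_lemma hv
  simp [sub_eq_zero] at hz
  refine ⟨(z : ℚ_[2]), ?_⟩
  have : ((z ^ 2 : ℤ_[2]) : ℚ_[2]) = ((C : ℤ_[2]) : ℚ_[2]) := by rw [hz]
  push_cast at this
  rw [← sq]; exact this.symm

lemma norm_two_q : ‖(2 : ℚ_[2])‖ = 1/2 := by
  have := @Padic.norm_p 2 _
  norm_num at this ⊢
  exact_mod_cast this

theorem koprowski_example
    (f : Polynomial ℚ) (hf : f = 4 * X ^ 6 + 4 * X ^ 3 + 9) :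
    (∀ α : ℚ, IsSquare ((f.eval α : ℚ) : ℚ_[2])) ∧
    ¬ ∃ h : Polynomial ℚ, h ^ 2 = f := by
  constructor
  · intro α
    subst hf
    set a : ℚ_[2] := (α : ℚ_[2]) with ha
    set b : ℚ_[2] := 2 * a ^ 3 + 1 with hb
    have hc : ((Polynomial.eval α (4 * X ^ 6 + 4 * X ^ 3 + 9) : ℚ) : ℚ_[2]) = b ^ 2 + 8 := by
      simp [hb]
      push_cast
      ring
    rw [hc]
    -- ‖b‖ ≥ 1
    have hbn : 1 ≤ ‖b‖ := by
      rcases eq_or_ne a 0 with h0 | h0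
      · simp [hb, h0]
      have hne : ‖2 * a ^ 3‖ ≠ ‖(1 : ℚ_[2])‖ := by
        rw [norm_one, norm_mul, norm_two_q, norm_pow]
        rw [Padic.norm_eq_zpow_neg_valuation h0]
        intro hcontra
        have h2 : ((2:ℝ) ^ (-a.valuation)) ^ 3 = 2 := by
          push_cast at hcontra ⊢
          linarith
        rw [← zpow_natCast (((2:ℝ)) ^ (-a.valuation)) 3, ← zpow_mul] at h2
        have h3 : -a.valuation * (3:ℤ) = 1 :=
          zpow_right_injective₀ (by norm_num) (by norm_num) (h2.trans (zpow_one (2:ℝ)).symm)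
        omega
      rw [hb, Padic.add_eq_max_of_ne hne, norm_one]
      exact le_max_right _ _
    have hb0 : b ≠ 0 := by
      intro h; rw [h, norm_zero] at hbn; linarith
    have h8 : ‖(8 : ℚ_[2])‖ = 1/8 := by
      have : (8 : ℚ_[2]) = 2 ^ 3 := by norm_num
      rw [this, norm_pow, norm_two_q]; norm_num
    have hu : IsSquare ((b ^ 2 + 8) / b ^ 2) := by
      apply sq_of_close_one
      have : (b ^ 2 + 8) / b ^ 2 - 1 = 8 / b ^ 2 := by field_simp; ring
      rw [this, norm_div, h8, norm_pow]
      have : (1:ℝ) ≤ ‖b‖ ^ 2 := one_le_pow₀ hbn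
      rw [div_lt_iff₀ (by linarith)]
      linarith
    have : b ^ 2 + 8 = b ^ 2 * ((b ^ 2 + 8) / b ^ 2) := by field_simp
    rw [this]
    exact (IsSquare.mul (⟨b, sq b⟩) hu)
  · rintro ⟨h, hh⟩
    have h17 : (Polynomial.eval 1 h) ^ 2 = (17 : ℚ) := by
      have := congrArg (Polynomial.eval (1:ℚ)) hh
      simp [hf] at this
      rw [this]; norm_num
    set q : ℚ := Polynomial.eval 1 h
    have hsq : IsSquare ((17 : ℤ) : ℚ) := ⟨q, by push_cast; rw [← h17]; ring⟩
    rw [Rat.isSquare_intCast_iff] at hsq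
    obtain ⟨r, hr⟩ := hsq
    have hb : -5 < r ∧ r < 5 := by constructor <;> nlinarith
    obtain ⟨hb1, hb2⟩ := hb
    interval_cases r <;> omega
end

section
/- Let k ≥ 1 be an integer and let q ∈ ℤ₂[x] be a polynomial whose leading coefficient is a unit of ℤ₂, and suppose that the reduction of q modulo 2 equals (X² + X + 1)^{2k} in 𝔽₂[X]. Then every irreducible factor of q in ℚ₂[x] has even degree. -/
open Polynomial

noncomputable instance : NormalizedGCDMonoid ℤ_[2] := by
  classical
  have : NormalizationMonoid ℤ_[2] := UniqueFactorizationMonoid.normalizationMonoid.toNormalizationMonoid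
  exact UniqueFactorizationMonoid.toNormalizedGCDMonoid ℤ_[2]

lemma irred_XXone : Irreducible ((X ^ 2 + X + 1 : Polynomial (ZMod 2))) := by
  have h2 : (X ^ 2 + X + 1 : Polynomial (ZMod 2)).natDegree = 2 := by compute_degree!
  rw [irreducible_iff_roots_eq_zero_of_degree_le_three (by omega) (by omega)]
  rw [Multiset.eq_zero_iff_forall_notMem]
  intro a ha
  rw [mem_roots] at ha
  · have := ha
    simp only [IsRoot, eval_add, eval_pow, eval_X, eval_one] at this
    clear ha; revert this; revert a; decide
  · intro h
    rw [h] at h2; simp at h2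

lemma map_toZMod_ne_zero {f : Polynomial ℤ_[2]} (hf : f.IsPrimitive) :
    f.map (PadicInt.toZMod (p := 2)) ≠ 0 := by
  intro h
  have hdvd : (C (2 : ℤ_[2])) ∣ f := by
    rw [C_dvd_iff_dvd_coeff]
    intro i
    have : PadicInt.toZMod (f.coeff i) = 0 := by
      have := congrArg (fun g => Polynomial.coeff g i) h
      simpa [coeff_map] using this
    have hk : f.coeff i ∈ RingHom.ker (PadicInt.toZMod : ℤ_[2] →+* ZMod 2) := this
    rw [PadicInt.ker_toZMod, PadicInt.maximalIdeal_eq_span_p, Ideal.mem_span_singleton] at hk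
    exact_mod_cast hk
  have := hf 2 hdvd
  exact (PadicInt.prime_p (p := 2)).not_unit (by exact_mod_cast this)

theorem irreducible_factors_even_degree_of_reduction_eq_pow
    (k : ℕ) (hk : 1 ≤ k) (q : Polynomial ℤ_[2])
    (hu : IsUnit q.leadingCoeff)
    (hred : q.map (PadicInt.toZMod (p := 2)) =
      ((X ^ 2 + X + 1) ^ (2 * k) : Polynomial (ZMod 2))) :
    ∀ p : Polynomial ℚ_[2], Irreducible p →
      p ∣ q.map (PadicInt.Coe.ringHom (p := 2)) → Even p.natDegree := by
  intro p hp hdvd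
  classical
  have hφ : (PadicInt.Coe.ringHom (p := 2)) = algebraMap ℤ_[2] ℚ_[2] := rfl
  rw [hφ] at hdvd
  set φ := algebraMap ℤ_[2] ℚ_[2]
  have hφinj : Function.Injective φ := IsFractionRing.injective _ _
  have hp0 : p ≠ 0 := hp.ne_zero
  -- q is primitive
  have hqprim : q.IsPrimitive := by
    intro r hr
    rw [C_dvd_iff_dvd_coeff] at hr
    exact isUnit_of_dvd_unit (hr q.natDegree) hu
  have hq0 : q ≠ 0 := hqprim.ne_zero
  -- integer normalization
  set n := IsLocalization.integerNormalization (nonZeroDivisors ℤ_[2]) p with hn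
  obtain ⟨⟨c, c0⟩, hc⟩ := IsLocalization.integerNormalization_map_to_map (nonZeroDivisors ℤ_[2]) p
  rw [mem_nonZeroDivisors_iff_ne_zero] at c0
  have hφc : φ c ≠ 0 := fun h => c0 (hφinj (by simpa using h))
  have hmapn : n.map φ = C (φ c) * p := by
    rw [← hn] at hc
    rw [hc]
    show c • p = C (φ c) * p
    rw [← algebraMap_smul ℚ_[2] c p, smul_eq_C_mul]
  have hn0 : n ≠ 0 := by
    intro h
    apply hp0
    have := hmapn
    rw [h, Polynomial.map_zero] at this
    rcases mul_eq_zero.mp this.symm with h1 | h1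
    · exact absurd (by simpa using h1) hφc
    · exact h1
  set p₀ := n.primPart with hp₀
  have hp₀prim : p₀.IsPrimitive := n.isPrimitive_primPart
  -- p₀ divides q
  have hmapdvd : p₀.map φ ∣ q.map φ := by
    have h1 : p₀ ∣ n := n.primPart_dvd
    have h2 : p₀.map φ ∣ n.map φ := Polynomial.map_dvd φ h1
    refine h2.trans ?_
    rw [hmapn]
    exact ((isUnit_C.mpr hφc.isUnit).mul_left_dvd).mpr hdvd
  have hp₀dvd : p₀ ∣ q :=
    hp₀prim.dvd_of_fraction_map_dvd_fraction_map hmapdvd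
  obtain ⟨r₀, hqe⟩ := hp₀dvd
  have hr₀prim : r₀.IsPrimitive := by
    intro s hs
    exact hqprim s (hqe ▸ hs.mul_left p₀)
  have hp₀0 : p₀ ≠ 0 := hp₀prim.ne_zero
  have hr₀0 : r₀ ≠ 0 := hr₀prim.ne_zero
  -- reduction mod 2
  set ψ := (PadicInt.toZMod : ℤ_[2] →+* ZMod 2)
  have hredmul : (p₀.map ψ) * (r₀.map ψ) = (X ^ 2 + X + 1) ^ (2 * k) := by
    rw [← Polynomial.map_mul, ← hqe, hred]
  have hmp₀ : p₀.map ψ ≠ 0 := map_toZMod_ne_zero hp₀prim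
  have hmr₀ : r₀.map ψ ≠ 0 := map_toZMod_ne_zero hr₀prim
  -- degree bookkeeping
  have hdegq : (q.map ψ).natDegree = q.natDegree :=
    natDegree_map_of_leadingCoeff_ne_zero ψ (by
      intro h
      have hk' : q.leadingCoeff ∈ RingHom.ker ψ := h
      rw [PadicInt.ker_toZMod, PadicInt.maximalIdeal_eq_span_p, Ideal.mem_span_singleton] at hk'
      exact (PadicInt.prime_p (p := 2)).not_unit
        (isUnit_of_dvd_unit (by exact_mod_cast hk') hu))
  have hsum : q.natDegree = p₀.natDegree + r₀.natDegree := by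
    rw [hqe]; exact natDegree_mul hp₀0 hr₀0
  have hsum2 : (q.map ψ).natDegree = (p₀.map ψ).natDegree + (r₀.map ψ).natDegree := by
    have : q.map ψ = (p₀.map ψ) * (r₀.map ψ) := by rw [hqe, Polynomial.map_mul]
    rw [this]; exact natDegree_mul hmp₀ hmr₀
  have hle1 : (p₀.map ψ).natDegree ≤ p₀.natDegree := natDegree_map_le
  have hle2 : (r₀.map ψ).natDegree ≤ r₀.natDegree := natDegree_map_le
  have hdeq : (p₀.map ψ).natDegree = p₀.natDegree := by omega
  -- p₀.map ψ divides prime power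
  have hprime : Prime ((X ^ 2 + X + 1 : Polynomial (ZMod 2))) := irred_XXone.prime
  have hdvdpow : p₀.map ψ ∣ (X ^ 2 + X + 1) ^ (2 * k) := ⟨r₀.map ψ, hredmul.symm⟩
  obtain ⟨i, hi, ⟨u, hu'⟩⟩ := (dvd_prime_pow hprime _).mp hdvdpow
  have hdeg2 : (p₀.map ψ).natDegree = 2 * i := by
    have h2 : ((X ^ 2 + X + 1 : Polynomial (ZMod 2))).natDegree = 2 := by compute_degree!
    have := congrArg natDegree hu'
    rw [natDegree_mul hmp₀ u.ne_zero, Polynomial.natDegree_eq_zero_of_isUnit u.isUnit,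
      add_zero, natDegree_pow, h2] at this
    omega
  -- natDegree p = natDegree p₀
  have hdp : p.natDegree = p₀.natDegree := by
    have h1 : p₀.natDegree = n.natDegree := n.natDegree_primPart
    have h2 : (n.map φ).natDegree = n.natDegree := natDegree_map_eq_of_injective hφinj n
    have h3 : (n.map φ).natDegree = p.natDegree := by
      rw [hmapn, natDegree_mul (by simpa using hφc) hp0, natDegree_C, zero_add]
    omega
  rw [hdp, ← hdeq, hdeg2]
  exact even_two_mul i
end

section
/- For every integer ℓ ≥ 2, the polynomial (2^{2ℓ} − 1)·x² + 2^{2ℓ} ∈ ℚ[x] (equivalently, 2^{2ℓ}·((x² + 1) − 2^{−2ℓ}·x²)) is NOT a sum of four squares in ℚ[x]. -/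
open Polynomial

private lemma no_three_sq_rep' (M : ℕ) (hM : M % 8 = 7) :
    ∀ n : ℕ, 0 < n → ∀ x y z : ℤ, x ^ 2 + y ^ 2 + z ^ 2 = (M : ℤ) * (n : ℤ) ^ 2 → False := by
  intro n
  induction n using Nat.strong_induction_on with
  | _ n ih =>
  intro hn x y z h
  rcases Nat.even_or_odd n with ⟨m, hm⟩ | hodd
  · -- even case: descend
    have hm0 : 0 < m := by omega
    have h4 : ((x : ZMod 4))^2 + (y : ZMod 4)^2 + (z : ZMod 4)^2 = 0 := by
      have := congrArg (fun t : ℤ => (t : ZMod 4)) h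
      push_cast at this
      rw [this, hm]
      push_cast
      have e : ((m : ZMod 4) + m)^2 = (4 : ZMod 4) * (m:ZMod 4)^2 := by ring
      rw [e, show (4 : ZMod 4) = 0 by decide, zero_mul, mul_zero]
    have hsq : ∀ a b c : ZMod 4, a^2+b^2+c^2 = 0 → a^2 = 0 ∧ b^2 = 0 ∧ c^2 = 0 := by decide
    obtain ⟨hx4, hy4, hz4⟩ := hsq _ _ _ h4
    have hdvd : ∀ w : ℤ, (w : ZMod 4)^2 = 0 → 2 ∣ w := by
      intro w hw
      have h4' : ((4:ℕ) : ℤ) ∣ w ^ 2 :=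
        (ZMod.intCast_zmod_eq_zero_iff_dvd _ 4).mp (by push_cast; exact hw)
      have h4'' : (4 : ℤ) ∣ w ^ 2 := by exact_mod_cast h4'
      exact Int.Prime.dvd_pow' (by norm_num) (dvd_trans (by norm_num) h4'')
    obtain ⟨x', hx⟩ := hdvd x hx4
    obtain ⟨y', hy⟩ := hdvd y hy4
    obtain ⟨z', hz⟩ := hdvd z hz4
    refine ih m (by omega) hm0 x' y' z' ?_
    have h4ne : (4 : ℤ) ≠ 0 := by norm_num
    apply mul_left_cancel₀ h4ne
    rw [hx, hy, hz, hm] at h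
    push_cast at h ⊢
    linear_combination h
  · -- odd case: contradiction mod 8
    have h8 : ((x : ZMod 8))^2 + (y : ZMod 8)^2 + (z : ZMod 8)^2 = 7 := by
      have := congrArg (fun t : ℤ => (t : ZMod 8)) h
      push_cast at this
      rw [this]
      have hM8 : (M : ZMod 8) = 7 := by
        rw [← ZMod.natCast_mod, hM]; rfl
      have hn8 : ((n : ZMod 8))^2 = 1 := by
        have : (n : ZMod 8) = ((n % 8 : ℕ) : ZMod 8) := (ZMod.natCast_mod n 8).symm
        rw [this]
        have h2 : n % 8 % 2 = 1 := by
          rw [Nat.mod_mod_of_dvd n (by norm_num)]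
          exact Nat.odd_iff.mp hodd
        have h8' : n % 8 < 8 := Nat.mod_lt _ (by norm_num)
        interval_cases (n % 8) <;> simp_all <;> decide
      rw [hM8, hn8]
      ring
    have : ∀ a b c : ZMod 8, a^2+b^2+c^2 ≠ 7 := by decide
    exact this _ _ _ h8

private lemma rat_no_three_sq' (M : ℕ)
    (hrep : ∀ n : ℕ, 0 < n → ∀ x y z : ℤ, x ^ 2 + y ^ 2 + z ^ 2 = (M : ℤ) * (n : ℤ) ^ 2 → False)
    (r₁ r₂ r₃ : ℚ) (h : r₁^2 + r₂^2 + r₃^2 = (M : ℚ)) : False := by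
  have hn0 : 0 < r₁.den * r₂.den * r₃.den := by positivity
  refine hrep _ hn0 (r₁.num * ((r₂.den : ℤ) * r₃.den)) (r₂.num * ((r₁.den : ℤ) * r₃.den))
    (r₃.num * ((r₁.den : ℤ) * r₂.den)) ?_
  have m1 : (r₁.num : ℚ) = r₁ * r₁.den := (Rat.mul_den_eq_num r₁).symm
  have m2 : (r₂.num : ℚ) = r₂ * r₂.den := (Rat.mul_den_eq_num r₂).symm
  have m3 : (r₃.num : ℚ) = r₃ * r₃.den := (Rat.mul_den_eq_num r₃).symm
  have key : ((r₁.num * ((r₂.den : ℤ) * r₃.den)) : ℚ)^2 + ((r₂.num * ((r₁.den : ℤ) * r₃.den)) : ℚ)^2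
      + ((r₃.num * ((r₁.den : ℤ) * r₂.den)) : ℚ)^2
      = (M : ℚ) * (((r₁.den * r₂.den * r₃.den : ℕ)) : ℚ)^2 := by
    push_cast
    rw [m1, m2, m3]
    linear_combination ((r₁.den : ℚ) * r₂.den * r₃.den)^2 * h
  exact_mod_cast key

private lemma arith_final' (ℓ : ℕ) (hℓ : 2 ≤ ℓ)
    (a₁ a₂ a₃ a₄ b₁ b₂ b₃ b₄ : ℚ)
    (hA : a₁^2+a₂^2+a₃^2+a₄^2 = (2 : ℚ) ^ (2 * ℓ) - 1)
    (hB : b₁^2+b₂^2+b₃^2+b₄^2 = (2 : ℚ) ^ (2 * ℓ))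
    (hs : a₁*b₁+a₂*b₂+a₃*b₃+a₄*b₄ = 0) : False := by
  set c₁ : ℚ := a₁*b₂ - a₂*b₁ + a₃*b₄ - a₄*b₃ with hc₁
  set c₂ : ℚ := a₁*b₃ - a₂*b₄ - a₃*b₁ + a₄*b₂ with hc₂
  set c₃ : ℚ := a₁*b₄ + a₂*b₃ - a₃*b₂ - a₄*b₁ with hc₃
  have hprod : ((2 : ℚ) ^ (2 * ℓ) - 1) * (2 : ℚ) ^ (2 * ℓ) = c₁^2 + c₂^2 + c₃^2 := by
    rw [← hA, ← hB, hc₁, hc₂, hc₃]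
    linear_combination (a₁*b₁+a₂*b₂+a₃*b₃+a₄*b₄) * hs
  set M : ℕ := 2 ^ (2 * ℓ) - 1 with hMdef
  have h1 : (1:ℕ) ≤ 2 ^ (2*ℓ) := Nat.one_le_two_pow
  have hMQ : (M : ℚ) = (2 : ℚ) ^ (2 * ℓ) - 1 := by
    rw [hMdef]
    push_cast [Nat.cast_sub h1]
    ring
  have hM8 : M % 8 = 7 := by
    have h16 : (16:ℕ) ∣ 2 ^ (2*ℓ) := by
      have : (2:ℕ)^4 ∣ 2 ^ (2*ℓ) := pow_dvd_pow 2 (by omega)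
      norm_num at this
      exact this
    omega
  have hpow : ((2:ℚ)^ℓ) ≠ 0 := by positivity
  have hr : (c₁ / 2^ℓ)^2 + (c₂ / 2^ℓ)^2 + (c₃ / 2^ℓ)^2 = (M : ℚ) := by
    rw [hMQ]
    field_simp
    linear_combination hprod.symm
  exact rat_no_three_sq' M (no_three_sq_rep' M hM8) _ _ _ hr

private lemma deg_bound' (A B : ℚ) (p₁ p₂ p₃ p₄ : ℚ[X])
    (h : C A * X ^ 2 + C B = p₁^2 + p₂^2 + p₃^2 + p₄^2) :
    p₁.natDegree ≤ 1 ∧ p₂.natDegree ≤ 1 ∧ p₃.natDegree ≤ 1 ∧ p₄.natDegree ≤ 1 := by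
  by_contra hc
  set d := max (max p₁.natDegree p₂.natDegree) (max p₃.natDegree p₄.natDegree) with hd
  have b1 : p₁.natDegree ≤ d := by omega
  have b2 : p₂.natDegree ≤ d := by omega
  have b3 : p₃.natDegree ≤ d := by omega
  have b4 : p₄.natDegree ≤ d := by omega
  have hd2 : 2 ≤ d := by
    simp only [not_and_or, not_le] at hc
    omega
  have ecoeff : ∀ p : ℚ[X], p.natDegree ≤ d → (p^2).coeff (2*d) = (p.coeff d)^2 := by
    intro p hp
    rw [pow_two, two_mul, coeff_mul_add_eq_of_natDegree_le hp hp, ← pow_two]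
  have hcoeff := congrArg (fun p : ℚ[X] => p.coeff (2 * d)) h
  simp only [coeff_add] at hcoeff
  rw [ecoeff _ b1, ecoeff _ b2, ecoeff _ b3, ecoeff _ b4] at hcoeff
  rw [coeff_C_mul, coeff_X_pow, if_neg (by omega), coeff_C, if_neg (by omega)] at hcoeff
  have h0 : (0:ℚ) = (p₁.coeff d)^2 + (p₂.coeff d)^2 + (p₃.coeff d)^2 + (p₄.coeff d)^2 := by
    rw [← hcoeff]; ring
  have hz : ∀ p : ℚ[X], p.natDegree ≤ d → p.coeff d = 0 → p.natDegree < d := by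
    intro p hp hpc
    rcases lt_or_eq_of_le hp with h' | h'
    · exact h'
    · exfalso
      have : p.leadingCoeff = 0 := by rw [leadingCoeff, h', hpc]
      have hp0 : p = 0 := leadingCoeff_eq_zero.mp this
      rw [hp0, natDegree_zero] at h'
      omega
  have c1 : p₁.coeff d = 0 := by nlinarith [sq_nonneg (p₁.coeff d), sq_nonneg (p₂.coeff d), sq_nonneg (p₃.coeff d), sq_nonneg (p₄.coeff d)]
  have c2 : p₂.coeff d = 0 := by nlinarith [sq_nonneg (p₁.coeff d), sq_nonneg (p₂.coeff d), sq_nonneg (p₃.coeff d), sq_nonneg (p₄.coeff d)]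
  have c3 : p₃.coeff d = 0 := by nlinarith [sq_nonneg (p₁.coeff d), sq_nonneg (p₂.coeff d), sq_nonneg (p₃.coeff d), sq_nonneg (p₄.coeff d)]
  have c4 : p₄.coeff d = 0 := by nlinarith [sq_nonneg (p₁.coeff d), sq_nonneg (p₂.coeff d), sq_nonneg (p₃.coeff d), sq_nonneg (p₄.coeff d)]
  have l1 := hz _ b1 c1
  have l2 := hz _ b2 c2
  have l3 := hz _ b3 c3
  have l4 := hz _ b4 c4
  omega

theorem x_sq_add_one_perturbed_not_sum_of_four_squares
    (ℓ : ℕ) (hℓ : 2 ≤ ℓ) :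
    ¬ ∃ p₁ p₂ p₃ p₄ : Polynomial ℚ,
        C ((2 : ℚ) ^ (2 * ℓ) - 1) * X ^ 2 + C ((2 : ℚ) ^ (2 * ℓ)) =
          p₁ ^ 2 + p₂ ^ 2 + p₃ ^ 2 + p₄ ^ 2 := by
  rintro ⟨p₁, p₂, p₃, p₄, h⟩
  obtain ⟨hd1, hd2, hd3, hd4⟩ := deg_bound' _ _ _ _ _ _ h
  obtain ⟨a₁, b₁, hp₁⟩ := p₁.exists_eq_X_add_C_of_natDegree_le_one hd1
  obtain ⟨a₂, b₂, hp₂⟩ := p₂.exists_eq_X_add_C_of_natDegree_le_one hd2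
  obtain ⟨a₃, b₃, hp₃⟩ := p₃.exists_eq_X_add_C_of_natDegree_le_one hd3
  obtain ⟨a₄, b₄, hp₄⟩ := p₄.exists_eq_X_add_C_of_natDegree_le_one hd4
  rw [hp₁, hp₂, hp₃, hp₄] at h
  have esq : ∀ a b : ℚ, (C a * X + C b)^2 = C (a^2) * X^2 + C (2*a*b) * X + C (b^2) := by
    intro a b
    rw [map_pow, map_pow, map_mul, map_mul, map_ofNat]
    ring
  rw [esq, esq, esq, esq] at h
  have hA : a₁^2+a₂^2+a₃^2+a₄^2 = (2 : ℚ) ^ (2 * ℓ) - 1 := by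
    have := congrArg (fun p : ℚ[X] => p.coeff 2) h
    simp only [coeff_add, coeff_C_mul, coeff_X_pow, coeff_X, coeff_C] at this
    norm_num at this
    linarith
  have hB : b₁^2+b₂^2+b₃^2+b₄^2 = (2 : ℚ) ^ (2 * ℓ) := by
    have := congrArg (fun p : ℚ[X] => p.coeff 0) h
    simp only [coeff_add, coeff_C_mul, coeff_X_pow, coeff_X, coeff_C] at this
    norm_num at this
    linarith
  have hs : a₁*b₁+a₂*b₂+a₃*b₃+a₄*b₄ = 0 := by
    have := congrArg (fun p : ℚ[X] => p.coeff 1) h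
    simp only [coeff_add, coeff_C_mul, coeff_X_pow, coeff_X, coeff_C] at this
    norm_num at this
    linarith
  exact arith_final' ℓ hℓ a₁ a₂ a₃ a₄ b₁ b₂ b₃ b₄ hA hB hs
end
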